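/- arXiv:1601.04162 — 5 statements merged into one kernel-verified Lean document; each statement's English description precedes it below -/
import Mathlib

section
/- If T is a tree with at least one edge, then pc(T) = χ'(T) = Δ(T), i.e., the proper connection number of a nontrivial tree equals its maximum degree, which also equals its edge-chromatic number. -/
open SimpleGraph

variable {V : Type*}

/-- A walk is proper w.r.t. an edge-coloring if consecutive edges get distinct colors. -/
def IsProperWalk {α : Type*} {G : SimpleGraph V} (c : Sym2 V → α) {u v : V} (p : G.Walk u v) : Prop :=
  p.edges.Chain' (fun e f => c e ≠ c f)

/-- An edge-coloring is a proper-path coloring if every pair of vertices is joined by a proper path. -/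
def IsProperConnColoring {α : Type*} (G : SimpleGraph V) (c : Sym2 V → α) : Prop :=
  ∀ u v : V, ∃ p : G.Walk u v, p.IsPath ∧ IsProperWalk c p

/-- The proper connection number. -/
noncomputable def pc (G : SimpleGraph V) : ℕ :=
  sInf {k | ∃ c : Sym2 V → Fin k, IsProperConnColoring G c}

/-- Strong property of an edge-coloring. -/
def HasStrongProp {α : Type*} (G : SimpleGraph V) (c : Sym2 V → α) : Prop :=
  IsProperConnColoring G c ∧
  ∀ u v : V, u ≠ v → ∃ p₁ p₂ : G.Walk u v, p₁.IsPath ∧ p₂.IsPath ∧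
    IsProperWalk c p₁ ∧ IsProperWalk c p₂ ∧
    p₁.edges.head?.map c ≠ p₂.edges.head?.map c ∧
    p₁.edges.getLast?.map c ≠ p₂.edges.getLast?.map c

/-- k-connectedness. -/
def KConnected (k : ℕ) (G : SimpleGraph V) [Fintype V] : Prop :=
  k < Fintype.card V ∧ ∀ S : Finset V, S.card < k → (G.induce ((↑S : Set V)ᶜ)).Connected

/-- edge chromatic number -/
noncomputable def edgeChromatic (G : SimpleGraph V) : ℕ :=
  sInf {k | ∃ c : Sym2 V → Fin k, ∀ e ∈ G.edgeSet, ∀ f ∈ G.edgeSet, e ≠ f →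
    (∃ x, x ∈ e ∧ x ∈ f) → c e ≠ c f}

/-- rainbow connection number -/
noncomputable def rc (G : SimpleGraph V) : ℕ :=
  sInf {k | ∃ c : Sym2 V → Fin k, ∀ u v : V, ∃ p : G.Walk u v, p.IsPath ∧ (p.edges.map c).Nodup}

/-!
In a tree the only path joining the far ends of two adjacent edges is the two-edge path through
them, so a colouring admitting proper paths between all vertices is exactly a proper edge colouring
(conversely every path is a trail, hence properly coloured by a proper edge colouring); this gives
`pc = χ'`. A proper edge colouring needs `Δ` colours at a vertex of maximum degree. Conversely, root
the tree at `r` and colour the edge from each vertex to its parent, top-down: at a vertex `p`, an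
injective labelling of the neighbours of `p` by `Δ` colours, composed with the transposition sending
the label of `parent p` to the colour already used on the edge above `p`, colours the edges to the
children of `p` distinctly and differently from that edge.
-/

def IsProperEdgeColoring {α : Type*} (G : SimpleGraph V) (c : Sym2 V → α) : Prop :=
  ∀ e ∈ G.edgeSet, ∀ f ∈ G.edgeSet, e ≠ f → (∃ x, x ∈ e ∧ x ∈ f) → c e ≠ c f

section EdgeColoring

variable {α : Type*} {G : SimpleGraph V} {c : Sym2 V → α}

theorem isProperWalk_iff {u v : V} (p : G.Walk u v) :
    IsProperWalk c p ↔ p.edges.IsChain (fun e f => c e ≠ c f) :=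
  Iff.rfl

theorem edgeChromatic_eq_sInf (G : SimpleGraph V) :
    edgeChromatic G = sInf {k | ∃ c : Sym2 V → Fin k, IsProperEdgeColoring G c} :=
  rfl

theorem isProperEdgeColoring_iff :
    IsProperEdgeColoring G c ↔
      ∀ ⦃x a b : V⦄, G.Adj x a → G.Adj x b → a ≠ b → c s(x, a) ≠ c s(x, b) := by
  refine ⟨fun hc x a b ha hb hab =>
    hc _ ha _ hb (fun h => hab (Sym2.congr_right.mp h)) ⟨x, by simp, by simp⟩,
    fun hc e he f hf hef ⟨x, hxe, hxf⟩ => ?_⟩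
  obtain ⟨a, rfl⟩ := Sym2.mem_iff_exists.mp hxe
  obtain ⟨b, rfl⟩ := Sym2.mem_iff_exists.mp hxf
  exact hc he hf fun hab => hef (hab ▸ rfl)

theorem IsProperEdgeColoring.maxDegree_le [Fintype V] [DecidableRel G.Adj] {k : ℕ}
    {c : Sym2 V → Fin k} (hc : IsProperEdgeColoring G c) : G.maxDegree ≤ k := by
  refine G.maxDegree_le_of_forall_degree_le k fun v => ?_
  rw [← card_neighborSet_eq_degree, ← Fintype.card_fin k]
  refine Fintype.card_le_of_injective (fun a => c s(v, a)) fun a b hab => ?_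
  by_contra hne
  exact isProperEdgeColoring_iff.mp hc a.2 b.2 (Subtype.coe_ne_coe.mpr hne) hab

theorem IsProperEdgeColoring.isProperWalk_of_isTrail (hc : IsProperEdgeColoring G c)
    {u v : V} {p : G.Walk u v} (hp : p.IsTrail) : IsProperWalk c p := by
  induction p with
  | nil => simp [isProperWalk_iff]
  | cons h q ih =>
    cases q with
    | nil => simp [isProperWalk_iff]
    | cons h' q' =>
      obtain ⟨hq, hfirst⟩ := (Walk.isTrail_cons _ _).mp hp
      simp only [isProperWalk_iff, Walk.edges_cons, List.isChain_cons_cons] at ih ⊢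
      refine ⟨hc _ h _ h' ?_ ⟨_, Sym2.mem_mk_right _ _, Sym2.mem_mk_left _ _⟩, ih hq⟩
      rintro heq
      exact hfirst (heq ▸ by simp)

theorem IsProperEdgeColoring.isProperConnColoring (hG : G.Connected)
    (hc : IsProperEdgeColoring G c) : IsProperConnColoring G c := by
  classical
  intro u v
  obtain ⟨p⟩ := hG u v
  exact ⟨p.bypass, p.bypass_isPath, hc.isProperWalk_of_isTrail p.bypass_isPath.isTrail⟩

/-- In an acyclic graph `a - x - b` is the only path from `a` to `b`, so it must be proper. -/
theorem IsProperConnColoring.isProperEdgeColoring (hG : G.IsAcyclic)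
    (hc : IsProperConnColoring G c) : IsProperEdgeColoring G c := by
  refine isProperEdgeColoring_iff.mpr fun x a b ha hb hab => ?_
  let q : G.Walk a b := .cons ha.symm (.cons hb .nil)
  have hq : q.IsPath := by simp [q, Walk.cons_isPath_iff, ha.ne', hab, hb.ne]
  obtain ⟨p, hp, hproper⟩ := hc a b
  obtain rfl : p = q := congrArg Subtype.val ((hG.subsingleton_path a b).elim ⟨p, hp⟩ ⟨q, hq⟩)
  simpa [isProperWalk_iff, q, Sym2.eq_swap] using hproper

end EdgeColoring

namespace SimpleGraph

theorem IsTree.pc_eq_edgeChromatic {G : SimpleGraph V} (hG : G.IsTree) :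
    pc G = edgeChromatic G := by
  rw [pc, edgeChromatic_eq_sInf]
  congr 1
  ext k
  exact exists_congr fun c =>
    ⟨fun hc => hc.isProperEdgeColoring hG.isAcyclic,
    fun hc => hc.isProperConnColoring hG.connected⟩

variable {G : SimpleGraph V} {r u v w x y : V}

theorem Connected.exists_adj_dist_add_one (hG : G.Connected) (r : V) (hv : v ≠ r) :
    ∃ u, G.Adj u v ∧ G.dist r u + 1 = G.dist r v := by
  obtain ⟨p, -, hp⟩ := hG.exists_path_of_dist v r
  cases p with
  | nil => exact absurd rfl hv
  | @cons _ u _ h q =>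
    refine ⟨u, h.symm, le_antisymm ?_ ?_⟩
    · have := dist_le q.reverse
      rw [Walk.length_cons, dist_comm] at hp
      rw [Walk.length_reverse] at this
      omega
    · have := hG.dist_triangle (u := r) (v := u) (w := v)
      rwa [dist_eq_one_iff_adj.mpr h.symm] at this

open Classical in
/-- The neighbour of `v` closest to the root `r`; the junk value at the root is `r` itself. -/
noncomputable def parent (G : SimpleGraph V) (r v : V) : V :=
  if h : ∃ u, G.Adj u v ∧ G.dist r u + 1 = G.dist r v then h.choose else v

theorem parent_self : G.parent r r = r := by
  simp [parent]

theorem Connected.adj_parent_and_dist (hG : G.Connected) (hv : v ≠ r) :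
    G.Adj (G.parent r v) v ∧ G.dist r (G.parent r v) + 1 = G.dist r v := by
  have h := hG.exists_adj_dist_add_one r hv
  rw [parent, dif_pos h]
  exact h.choose_spec

theorem Connected.adj_parent (hG : G.Connected) (hv : v ≠ r) : G.Adj (G.parent r v) v :=
  (hG.adj_parent_and_dist hv).1

theorem Connected.dist_parent_add_one (hG : G.Connected) (hv : v ≠ r) :
    G.dist r (G.parent r v) + 1 = G.dist r v :=
  (hG.adj_parent_and_dist hv).2

/-- Appending the edge to `v` to shortest paths from `r` gives two paths from `r` to `v`. -/
theorem IsAcyclic.eq_of_adj_of_dist_add_one (hG : G.IsAcyclic) (hu : G.Adj u v) (hw : G.Adj w v)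
    (hdu : G.dist r u + 1 = G.dist r v) (hdw : G.dist r w + 1 = G.dist r v) : u = w := by
  have hr : G.Reachable r v := Reachable.of_dist_ne_zero (by omega)
  obtain ⟨p, -, hp⟩ := (hr.trans hu.symm.reachable).exists_path_of_dist
  obtain ⟨q, -, hq⟩ := (hr.trans hw.symm.reachable).exists_path_of_dist
  have hpu : (p.concat hu).IsPath := Walk.isPath_of_length_eq_dist _ (by simp [hp, hdu])
  have hqw : (q.concat hw).IsPath := Walk.isPath_of_length_eq_dist _ (by simp [hq, hdw])
  have := congrArg (fun P : G.Path r v => P.1.penultimate)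
    ((hG.subsingleton_path r v).elim ⟨_, hpu⟩ ⟨_, hqw⟩)
  simpa using this

theorem IsTree.parent_eq_of_adj (hG : G.IsTree) (h : G.Adj u v)
    (hd : G.dist r u + 1 = G.dist r v) : v ≠ r ∧ G.parent r v = u := by
  have hv : v ≠ r := by
    rintro rfl
    simp at hd
  exact ⟨hv, hG.isAcyclic.eq_of_adj_of_dist_add_one (hG.connected.adj_parent hv) h
    (hG.connected.dist_parent_add_one hv) hd⟩

theorem IsTree.parent_eq_or_parent_eq_of_adj (hG : G.IsTree) (r : V) (h : G.Adj x y) :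
    y ≠ r ∧ G.parent r y = x ∨ x ≠ r ∧ G.parent r x = y := by
  rcases hG.dist_eq_dist_add_one_of_adj r h with hd | hd
  · exact .inr (hG.parent_eq_of_adj h.symm hd.symm)
  · exact .inl (hG.parent_eq_of_adj h hd.symm)

theorem IsTree.injective_parent_edge (hG : G.IsTree) (r : V) :
    Function.Injective fun v => s(G.parent r v, v) := by
  intro v w hvw
  obtain ⟨-, rfl⟩ | ⟨hw, hv⟩ := Sym2.eq_iff.mp hvw
  · rfl
  by_contra hne
  have hvr : v ≠ r := fun h => hne (by rw [← hw, h, parent_self])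
  have hwr : w ≠ r := fun h => hne (by rw [hv, h, parent_self])
  have h1 := hG.connected.dist_parent_add_one hvr
  have h2 := hG.connected.dist_parent_add_one hwr
  rw [hw] at h1
  rw [← hv] at h2
  omega

section TreeEdgeColoring

variable (G) (r) {k : ℕ} (g : V → V → Fin k)

/-- `n` is the depth of `v`, so the junk base case is reached only at the root. -/
noncomputable def parentEdgeColorAux : ℕ → V → Fin k
  | 0, v => g v v
  | n + 1, v =>
    Equiv.swap (g (G.parent r v) (G.parent r (G.parent r v)))
      (parentEdgeColorAux n (G.parent r v)) (g (G.parent r v) v)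

noncomputable def parentEdgeColor (v : V) : Fin k :=
  parentEdgeColorAux G r g (G.dist r v) v

noncomputable def treeEdgeColoring : Sym2 V → Fin k :=
  Function.extend (fun v => s(G.parent r v, v)) (parentEdgeColor G r g) fun _ => g r r

variable {G r g}

theorem Connected.parentEdgeColor_eq (hG : G.Connected) (hv : v ≠ r) :
    parentEdgeColor G r g v =
      Equiv.swap (g (G.parent r v) (G.parent r (G.parent r v)))
        (parentEdgeColor G r g (G.parent r v)) (g (G.parent r v) v) := by
  rw [parentEdgeColor, ← hG.dist_parent_add_one hv]
  rfl

theorem IsTree.treeEdgeColoring_parent (hG : G.IsTree) (v : V) :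
    treeEdgeColoring G r g s(G.parent r v, v) = parentEdgeColor G r g v :=
  (hG.injective_parent_edge r).extend_apply _ _ v

variable (hg : ∀ p, Set.InjOn (g p) (G.neighborSet p))
include hg

theorem IsTree.parentEdgeColor_ne_of_parent_eq (hG : G.IsTree) (hv : v ≠ r) (hw : w ≠ r)
    (hvw : v ≠ w) (hp : G.parent r v = G.parent r w) :
    parentEdgeColor G r g v ≠ parentEdgeColor G r g w := by
  rw [hG.connected.parentEdgeColor_eq hv, hG.connected.parentEdgeColor_eq hw, ← hp,
    (Equiv.injective _).ne_iff]
  exact (hg _).ne (hG.connected.adj_parent hv) (hp ▸ hG.connected.adj_parent hw) hvw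

theorem IsTree.parentEdgeColor_ne_parent (hG : G.IsTree) (hv : v ≠ r) (hp : G.parent r v ≠ r) :
    parentEdgeColor G r g v ≠ parentEdgeColor G r g (G.parent r v) := by
  have hpp : G.parent r (G.parent r v) ≠ v := by
    have h1 := hG.connected.dist_parent_add_one hv
    have h2 := hG.connected.dist_parent_add_one hp
    intro h
    rw [h] at h2
    omega
  generalize hpv : G.parent r v = p at *
  rw [hG.connected.parentEdgeColor_eq hv, hpv]
  nth_rw 2 [← Equiv.swap_apply_left (g p (G.parent r p)) (parentEdgeColor G r g p)]
  rw [(Equiv.injective _).ne_iff]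
  exact (hg p).ne (hpv ▸ hG.connected.adj_parent hv) (hG.connected.adj_parent hp).symm hpp.symm

theorem IsTree.isProperEdgeColoring_treeEdgeColoring (hG : G.IsTree) :
    IsProperEdgeColoring G (treeEdgeColoring G r g) := by
  refine isProperEdgeColoring_iff.mpr fun x a b ha hb hab => ?_
  rcases hG.parent_eq_or_parent_eq_of_adj r ha with ⟨har, rfl⟩ | ⟨hxr, rfl⟩ <;>
    rcases hG.parent_eq_or_parent_eq_of_adj r hb with ⟨hbr, hpb⟩ | ⟨hxr', rfl⟩
  · rw [hG.treeEdgeColoring_parent, ← hpb, hG.treeEdgeColoring_parent]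
    exact hG.parentEdgeColor_ne_of_parent_eq hg har hbr hab hpb.symm
  · rw [Sym2.eq_swap (b := G.parent r (G.parent r a)), hG.treeEdgeColoring_parent,
      hG.treeEdgeColoring_parent]
    exact hG.parentEdgeColor_ne_parent hg har hxr'
  · subst hpb
    rw [Sym2.eq_swap, hG.treeEdgeColoring_parent, hG.treeEdgeColoring_parent]
    exact (hG.parentEdgeColor_ne_parent hg hbr hxr).symm
  · exact absurd rfl hab

end TreeEdgeColoring

theorem IsTree.exists_isProperEdgeColoring [G.LocallyFinite] (hG : G.IsTree) {k : ℕ}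
    (hk : 0 < k) (hdeg : ∀ v, G.degree v ≤ k) : ∃ c : Sym2 V → Fin k, IsProperEdgeColoring G c := by
  have : Nonempty (Fin k) := ⟨⟨0, hk⟩⟩
  have hg (p : V) : ∃ gp : V → Fin k, Set.InjOn gp (G.neighborSet p) := by
    refine Set.exists_injOn_iff_injective.mpr
      ⟨_, (Function.Embedding.nonempty_of_card_le ?_).some.injective⟩
    rw [Fintype.card_fin, card_neighborSet_eq_degree]
    exact hdeg p
  choose g hg using hg
  obtain ⟨r⟩ := hG.connected.nonempty
  exact ⟨_, hG.isProperEdgeColoring_treeEdgeColoring (r := r) hg⟩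

theorem IsTree.edgeChromatic_eq_maxDegree [Fintype V] [DecidableRel G.Adj] (hG : G.IsTree)
    (hne : G.edgeSet.Nonempty) : edgeChromatic G = G.maxDegree := by
  have hpos : 0 < G.maxDegree :=
    Nat.pos_of_ne_zero fun h => hne.ne_empty (edgeSet_eq_empty.mpr (maxDegree_eq_zero_iff.mp h))
  obtain ⟨c, hc⟩ := hG.exists_isProperEdgeColoring hpos G.degree_le_maxDegree
  rw [edgeChromatic_eq_sInf]
  exact le_antisymm (Nat.sInf_le ⟨c, hc⟩)
    (le_csInf ⟨_, c, hc⟩ fun k ⟨_, hc'⟩ => hc'.maxDegree_le)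

end SimpleGraph

theorem stmt_3 [Fintype V] (T : SimpleGraph V) [DecidableRel T.Adj]
    (hconn : T.Connected) (hacyc : T.IsAcyclic) (hnt : T.edgeSet.Nonempty) :
    pc T = edgeChromatic T ∧ edgeChromatic T = T.maxDegree := by
  have hT : T.IsTree := ⟨hconn, hacyc⟩
  exact ⟨hT.pc_eq_edgeChromatic, hT.edgeChromatic_eq_maxDegree hnt⟩
end

section
/- If G is a 3-connected noncomplete graph, then pc(G) = 2 and there exists a 2-edge-coloring c of G such that G has the strong property under c. -/
open SimpleGraph

variable {V : Type*}

/-!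
Take a maximum cut `A` of `G`. Moving a vertex set `C` to the other side of the cut shows that at
least half of the edges leaving `C` cross `A`; since `G` is 3-connected, at least three edges leave
`C`, so the bipartite graph of the cut edges is 2-edge-connected. By Robbins' theorem it has a
strongly connected orientation. Colour every arc by the side of the cut containing its head.
Consecutive vertices of a directed path lie on alternate sides, so directed paths are proper;
a directed path from `u` to `v` and a reversed directed path from `v` to `u` start with different
colours and end with different colours. A noncomplete graph needs two colours.
-/

namespace SimpleGraph

open Finset Relation
open scoped Classical symmDiff

section Cut

variable (G : SimpleGraph V)

def cutGraph (A : Finset V) : SimpleGraph V where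
  Adj a b := G.Adj a b ∧ (a ∈ A ↔ b ∉ A)
  symm := ⟨fun _ _ h => ⟨h.1.symm, by tauto⟩⟩
  loopless := ⟨fun a h => G.loopless.irrefl a h.1⟩

variable {G}

@[simp]
lemma cutGraph_adj {A : Finset V} {a b : V} :
    (G.cutGraph A).Adj a b ↔ G.Adj a b ∧ (a ∈ A ↔ b ∉ A) :=
  Iff.rfl

lemma cutGraph_le (A : Finset V) : G.cutGraph A ≤ G := fun _ _ h => h.1

lemma cutGraph_cutGraph (A C : Finset V) :
    (G.cutGraph A).cutGraph C = G.cutGraph A ⊓ G.cutGraph C := by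
  ext a b
  simp only [cutGraph_adj, inf_adj]
  tauto

lemma edgeSet_cutGraph_symmDiff (A C : Finset V) :
    (G.cutGraph (A ∆ C)).edgeSet = (G.cutGraph A).edgeSet ∆ (G.cutGraph C).edgeSet := by
  ext e
  induction e using Sym2.ind with
  | h a b =>
    simp only [mem_edgeSet, cutGraph_adj, Set.mem_symmDiff, Finset.mem_symmDiff]
    tauto

lemma exists_mem_ne_ne_of_not_adj {e : Sym2 V} (he : e ∈ G.edgeSet) {a b : V}
    (hab : ¬ G.Adj a b) : ∃ w ∈ e, w ≠ a ∧ w ≠ b := by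
  induction e using Sym2.ind with
  | h x y =>
    rw [mem_edgeSet] at he
    by_cases hx : x = a ∨ x = b
    · refine ⟨y, Sym2.mem_mk_right x y, ?_, ?_⟩ <;> rintro rfl <;> rcases hx with rfl | rfl
      exacts [he.ne rfl, hab he.symm, hab he, he.ne rfl]
    · push Not at hx
      exact ⟨x, Sym2.mem_mk_left x y, hx⟩

variable [Fintype V]

variable (G) in
def IsMaxCut (A : Finset V) : Prop :=
  ∀ A' : Finset V, #(G.cutGraph A').edgeFinset ≤ #(G.cutGraph A).edgeFinset

variable (G) in
lemma exists_isMaxCut : ∃ A, G.IsMaxCut A := by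
  obtain ⟨A, -, hA⟩ := exists_max_image univ (fun A => #(G.cutGraph A).edgeFinset) univ_nonempty
  exact ⟨A, fun A' => hA A' (mem_univ A')⟩

/-- Replacing `A` by `A ∆ C` swaps the edges leaving `C` inside and outside the cut of `A`. -/
lemma IsMaxCut.card_edgeFinset_cutGraph_le {A : Finset V} (hA : G.IsMaxCut A) (C : Finset V) :
    #(G.cutGraph C).edgeFinset ≤ 2 * #((G.cutGraph A).cutGraph C).edgeFinset := by
  set X := (G.cutGraph A).edgeFinset
  set Y := (G.cutGraph C).edgeFinset
  have hswap : (G.cutGraph (A ∆ C)).edgeFinset = X \ Y ∪ Y \ X := by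
    ext e
    simp [X, Y, edgeSet_cutGraph_symmDiff, Set.mem_symmDiff]
  have hcard : #(G.cutGraph (A ∆ C)).edgeFinset ≤ #X := hA (A ∆ C)
  rw [hswap, card_union_of_disjoint disjoint_sdiff_sdiff] at hcard
  have hinter : ((G.cutGraph A).cutGraph C).edgeFinset = X ∩ Y := by
    ext e
    simp [X, Y, cutGraph_cutGraph]
  rw [hinter]
  have hX := card_sdiff_add_card_inter X Y
  have hY := card_sdiff_add_card_inter Y X
  rw [inter_comm] at hY
  omega

lemma exists_not_adj_of_card_edgeFinset_cutGraph_lt {C : Finset V} (hC : C.Nonempty)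
    (hCc : Cᶜ.Nonempty) (h : #(G.cutGraph C).edgeFinset + 1 < Fintype.card V) :
    ∃ a ∈ C, ∃ b ∉ C, ¬ G.Adj a b := by
  by_contra! hall
  have hsub : (C ×ˢ Cᶜ).image (fun p => s(p.1, p.2)) ⊆ (G.cutGraph C).edgeFinset := by
    simp only [subset_iff, mem_image, mem_product, mem_compl]
    rintro _ ⟨⟨x, y⟩, ⟨hx, hy⟩, rfl⟩
    simpa [hx, hy] using hall x hx y hy
  have hinj : Set.InjOn (fun p : V × V => s(p.1, p.2)) (C ×ˢ Cᶜ : Finset (V × V)) := by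
    rintro ⟨x, y⟩ hxy ⟨x', y'⟩ hxy' he
    simp only [coe_product, Set.mem_prod, mem_coe, mem_compl] at hxy hxy'
    rcases Sym2.eq_iff.mp he with ⟨rfl, rfl⟩ | ⟨rfl, rfl⟩
    · rfl
    · exact absurd hxy.1 hxy'.2
  have hprod := card_le_card hsub
  rw [card_image_of_injOn hinj, card_product] at hprod
  have hV := card_add_card_compl C
  have := hC.card_pos
  have := hCc.card_pos
  nlinarith

lemma _root_.KConnected.le_card_edgeFinset_cutGraph {k : ℕ} (hG : KConnected k G) {C : Finset V}
    (hC : C.Nonempty) (hCc : Cᶜ.Nonempty) : k ≤ #(G.cutGraph C).edgeFinset := by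
  by_contra! hlt
  obtain ⟨a, ha, b, hb, hab⟩ :=
    exists_not_adj_of_card_edgeFinset_cutGraph_lt (G := G) hC hCc (by have := hG.1; omega)
  set X := (G.cutGraph C).edgeFinset
  -- an endpoint of each cut edge other than `a` and `b`: fewer than `k` vertices separating them
  choose f hf using fun e (he : e ∈ X) =>
    exists_mem_ne_ne_of_not_adj (edgeSet_mono (cutGraph_le C) (mem_edgeFinset.mp he)) hab
  set S := X.attach.image fun e => f e.1 e.2
  have hS : #S < k := (card_image_le.trans_eq card_attach).trans_lt hlt
  have haS : a ∉ S := by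
    simp only [S, mem_image, mem_attach, true_and, not_exists]
    exact fun e h => (hf e.1 e.2).2.1 h
  have hbS : b ∉ S := by
    simp only [S, mem_image, mem_attach, true_and, not_exists]
    exact fun e h => (hf e.1 e.2).2.2 h
  obtain ⟨p⟩ := (hG.2 S hS).preconnected ⟨a, haS⟩ ⟨b, hbS⟩
  obtain ⟨d, -, hd₁, hd₂⟩ := p.exists_boundary_dart {w | ↑w ∈ C} (by exact ha) (by exact hb)
  have hdX : s(d.fst.1, d.snd.1) ∈ X := by
    simp only [X, mem_edgeFinset, mem_edgeSet, cutGraph_adj]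
    exact ⟨d.adj, iff_of_true hd₁ hd₂⟩
  have hwS : f _ hdX ∈ S := mem_image_of_mem _ (mem_attach X ⟨_, hdX⟩)
  rcases Sym2.mem_iff.mp (hf _ hdX).1 with h | h
  · exact d.fst.2 (h ▸ hwS)
  · exact d.snd.2 (h ▸ hwS)

end Cut

section EdgeConnectivity

variable [Fintype V] {H : SimpleGraph V}

lemma preconnected_of_forall_exists_adj
    (h : ∀ C : Finset V, C.Nonempty → Cᶜ.Nonempty → ∃ x ∈ C, ∃ y ∉ C, H.Adj x y) :
    H.Preconnected := by
  intro u v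
  by_contra huv
  obtain ⟨x, hx, y, hy, hxy⟩ := h {w | H.Reachable u w} ⟨u, by simp⟩ ⟨v, by simpa using huv⟩
  simp only [mem_filter, mem_univ, true_and] at hx hy
  exact hy (hx.trans hxy.reachable)

lemma isEdgeConnected_two_of_forall_two_le
    (h : ∀ C : Finset V, C.Nonempty → Cᶜ.Nonempty → 2 ≤ #(H.cutGraph C).edgeFinset) :
    H.IsEdgeConnected 2 := by
  refine isEdgeConnected_two.mpr fun e => preconnected_of_forall_exists_adj fun C hC hCc => ?_
  obtain ⟨f, hf, hfe⟩ := exists_mem_ne (h C hC hCc) e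
  induction f using Sym2.ind with
  | h x y =>
    rw [mem_edgeFinset, mem_edgeSet, cutGraph_adj] at hf
    by_cases hx : x ∈ C
    · exact ⟨x, hx, y, by tauto, deleteEdges_adj.mpr ⟨hf.1, by simpa using hfe⟩⟩
    · exact ⟨y, by tauto, x, hx, deleteEdges_adj.mpr ⟨hf.1.symm, by simpa [Sym2.eq_swap] using hfe⟩⟩

lemma IsMaxCut.isEdgeConnected_two_cutGraph {G : SimpleGraph V} (hG : KConnected 3 G)
    {A : Finset V} (hA : G.IsMaxCut A) : (G.cutGraph A).IsEdgeConnected 2 :=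
  isEdgeConnected_two_of_forall_two_le fun C hC hCc => by
    have := hG.le_card_edgeFinset_cutGraph hC hCc
    have := hA.card_edgeFinset_cutGraph_le C
    omega

end EdgeConnectivity

section Orientation

variable {G B : SimpleGraph V} {R : V → V → Prop}

lemma Walk.reflTransGen_of_forall_darts {u v : V} (p : G.Walk u v)
    (h : ∀ d ∈ p.darts, ReflTransGen R d.fst d.snd) : ReflTransGen R u v := by
  induction p with
  | nil => exact .refl
  | cons _ q ih =>
    rw [Walk.darts_cons, List.forall_mem_cons] at h
    exact h.1.trans (ih h.2)

lemma Walk.reflTransGen_of_mem_support {u v w : V} (p : G.Walk u v)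
    (h : ∀ d ∈ p.darts, ReflTransGen R d.fst d.snd) (hw : w ∈ p.support) :
    ReflTransGen R u w ∧ ReflTransGen R w v :=
  ⟨(p.takeUntil w hw).reflTransGen_of_forall_darts fun d hd =>
      h d (p.darts_takeUntil_subset_darts hw hd),
    (p.dropUntil w hw).reflTransGen_of_forall_darts fun d hd =>
      h d (p.darts_dropUntil_subset_darts hw hd)⟩

lemma exists_isPath_of_reflTransGen (hR : ∀ ⦃a b⦄, R a b → G.Adj a b) {u v : V}
    (h : ReflTransGen R u v) : ∃ p : G.Walk u v, p.IsPath ∧ ∀ d ∈ p.darts, R d.fst d.snd := by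
  obtain ⟨p, hp⟩ : ∃ p : G.Walk u v, ∀ d ∈ p.darts, R d.fst d.snd := by
    induction h using ReflTransGen.head_induction_on with
    | refl => exact ⟨.nil, by simp⟩
    | head hab _ ih =>
      obtain ⟨p, hp⟩ := ih
      exact ⟨.cons (hR hab) p, by simpa [hab] using hp⟩
  exact ⟨p.bypass, p.bypass_isPath, fun d hd => hp d (p.darts_bypass_subset_darts hd)⟩

lemma IsEdgeConnected.exists_isTrail_cons (hB : B.IsEdgeConnected 2) {x y : V}
    (hxy : B.Adj x y) : ∃ q : B.Walk y x, (Walk.cons hxy q).IsTrail := by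
  obtain ⟨q⟩ := isEdgeConnected_two.mp hB s(x, y) y x
  refine ⟨q.bypass.mapLe (deleteEdges_le _),
    (Walk.isTrail_cons _ _).mpr ⟨q.bypass_isPath.isTrail.mapLe _, fun h => ?_⟩⟩
  rw [Walk.edges_mapLe_eq_edges] at h
  have := q.bypass.edges_subset_edgeSet h
  rw [edgeSet_deleteEdges] at this
  exact this.2 rfl

structure IsStrongOrientationOn (B : SimpleGraph V) (W : Finset V) (D : V → V → Prop) : Prop where
  adj ⦃a b : V⦄ : D a b → B.Adj a b
  asymm ⦃a b : V⦄ : D a b → ¬ D b a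
  mem ⦃a b : V⦄ : D a b → a ∈ W ∧ b ∈ W
  reach ⦃a b : V⦄ : a ∈ W → b ∈ W → ReflTransGen D a b

lemma isStrongOrientationOn_of_subsingleton {W : Finset V} (hW : (W : Set V).Subsingleton) :
    IsStrongOrientationOn B W (fun _ _ => False) where
  adj _ _ := False.elim
  asymm _ _ := False.elim
  mem _ _ := False.elim
  reach _ _ ha hb := hW ha hb ▸ .refl

/-- The ear step: orient the closed trail `c` along itself, except on the edges already oriented
by `D`; those join two vertices of `W`, which `D` already connects both ways. -/
lemma IsStrongOrientationOn.union_support {W : Finset V} {D : V → V → Prop}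
    (hD : IsStrongOrientationOn B W D) {x : V} (hx : x ∈ W) {c : B.Walk x x} (hc : c.IsTrail) :
    IsStrongOrientationOn B (W ∪ c.support.toFinset)
      (fun a b => D a b ∨ (∃ d ∈ c.darts, d.fst = a ∧ d.snd = b) ∧ ¬ D b a) := by
  set D' := fun a b => D a b ∨ (∃ d ∈ c.darts, d.fst = a ∧ d.snd = b) ∧ ¬ D b a
  have hmono {a b : V} (h : ReflTransGen D a b) : ReflTransGen D' a b :=
    ReflTransGen.mono (fun _ _ => Or.inl) _ _ h
  have hstep : ∀ d ∈ c.darts, ReflTransGen D' d.fst d.snd := by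
    intro d hd
    by_cases hrev : D d.snd d.fst
    · exact hmono (hD.reach (hD.mem hrev).2 (hD.mem hrev).1)
    · exact .single (Or.inr ⟨⟨d, hd, rfl, rfl⟩, hrev⟩)
  have hreach : ∀ a ∈ W ∪ c.support.toFinset, ReflTransGen D' a x ∧ ReflTransGen D' x a := by
    intro a ha
    rcases mem_union.mp ha with ha | ha
    · exact ⟨hmono (hD.reach ha hx), hmono (hD.reach hx ha)⟩
    · exact (c.reflTransGen_of_mem_support hstep (List.mem_toFinset.mp ha)).symm
  refine ⟨?_, ?_, ?_, fun a b ha hb => (hreach a ha).1.trans (hreach b hb).2⟩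
  · rintro a b (h | ⟨⟨d, -, rfl, rfl⟩, -⟩)
    exacts [hD.adj h, d.adj]
  · rintro a b (hab | ⟨⟨d, hd, rfl, rfl⟩, hba⟩) (hba' | ⟨⟨d', hd', hd₁, hd₂⟩, hab'⟩)
    · exact hD.asymm hab hba'
    · exact hab' hab
    · exact hba hba'
    · obtain rfl : d' = d.symm := Dart.ext _ _ (Prod.ext hd₁ hd₂)
      exact d.symm_ne (List.inj_on_of_nodup_map hc.edges_nodup hd' hd d.edge_symm)
  · rintro a b (h | ⟨⟨d, hd, rfl, rfl⟩, -⟩)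
    · exact ⟨mem_union_left _ (hD.mem h).1, mem_union_left _ (hD.mem h).2⟩
    · exact ⟨mem_union_right _ (List.mem_toFinset.mpr (c.dart_fst_mem_support_of_mem_darts hd)),
        mem_union_right _ (List.mem_toFinset.mpr (c.dart_snd_mem_support_of_mem_darts hd))⟩

lemma IsStrongOrientationOn.exists_ssuperset (hB : B.IsEdgeConnected 2) {W : Finset V}
    {D : V → V → Prop} (hD : IsStrongOrientationOn B W D) (hW : W.Nonempty) {u : V} (hu : u ∉ W) :
    ∃ W' D', W ⊂ W' ∧ IsStrongOrientationOn B W' D' := by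
  obtain ⟨w, hw⟩ := hW
  obtain ⟨p⟩ := hB.preconnected two_ne_zero w u
  obtain ⟨⟨⟨x, y⟩, hxy⟩, -, hx, hy⟩ := p.exists_boundary_dart W hw hu
  obtain ⟨q, hq⟩ := hB.exists_isTrail_cons hxy
  exact ⟨_, _, ssubset_iff_of_subset subset_union_left |>.mpr ⟨y, by simp, hy⟩,
    hD.union_support hx hq⟩

/-- Robbins' theorem. -/
theorem exists_isStrongOrientationOn_univ [Fintype V] (hB : B.IsEdgeConnected 2) :
    ∃ D, IsStrongOrientationOn B univ D := by
  obtain ⟨W, hW, hmax⟩ := exists_max_image {W : Finset V | ∃ D, IsStrongOrientationOn B W D} card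
    ⟨∅, by simpa using ⟨_, isStrongOrientationOn_of_subsingleton (by simp)⟩⟩
  obtain ⟨D, hD⟩ := (mem_filter.mp hW).2
  by_cases hWu : W = univ
  · exact ⟨D, hWu ▸ hD⟩
  obtain ⟨u, hu⟩ := not_forall.mp (mt eq_univ_iff_forall.mpr hWu)
  obtain ⟨W', D', hWW', hD'⟩ : ∃ W' D', W ⊂ W' ∧ IsStrongOrientationOn B W' D' := by
    rcases W.eq_empty_or_nonempty with rfl | hW
    · exact ⟨{u}, _, (singleton_nonempty u).empty_ssubset,
        isStrongOrientationOn_of_subsingleton (by simp)⟩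
    · exact hD.exists_ssuperset hB hW hu
  exact absurd (hmax W' (by simpa using ⟨D', hD'⟩)) (card_lt_card hWW').not_ge

end Orientation

lemma _root_.isProperWalk_iff_s7 {α : Type*} {G : SimpleGraph V} {c : Sym2 V → α} {u v : V}
    {p : G.Walk u v} : IsProperWalk c p ↔ p.edges.IsChain (fun e f => c e ≠ c f) :=
  Iff.rfl

section Coloring

variable {G : SimpleGraph V} {A : Finset V} {D : V → V → Prop}

noncomputable def side (A : Finset V) (v : V) : Fin 2 := if v ∈ A then 0 else 1

noncomputable def arcColoring (A : Finset V) (D : V → V → Prop) (e : Sym2 V) : Fin 2 :=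
  if ∃ a b, D a b ∧ e = s(a, b) ∧ b ∈ A then 0 else 1

lemma side_ne_of_adj {a b : V} (h : (G.cutGraph A).Adj a b) : side A a ≠ side A b := by
  rw [cutGraph_adj] at h
  unfold side
  split_ifs <;> simp_all

lemma arcColoring_of_rel (hD : ∀ ⦃a b⦄, D a b → ¬ D b a) {a b : V} (h : D a b) :
    arcColoring A D s(a, b) = side A b := by
  unfold arcColoring side
  by_cases hb : b ∈ A
  · rw [if_pos ⟨a, b, h, rfl, hb⟩, if_pos hb]
  · rw [if_neg hb, if_neg]
    rintro ⟨a', b', h', he, hb'⟩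
    rcases Sym2.eq_iff.mp he with ⟨rfl, rfl⟩ | ⟨rfl, rfl⟩
    exacts [hb hb', hD h h']

section DirectedWalk

variable (hD : ∀ ⦃a b⦄, D a b → ¬ D b a) {u v : V} (p : (G.cutGraph A).Walk u v)
  (hp : ∀ d ∈ p.darts, D d.fst d.snd)
include hD hp

lemma map_arcColoring_edges : p.edges.map (arcColoring A D) = p.support.tail.map (side A) := by
  rw [← Walk.map_snd_darts, Walk.edges, List.map_map, List.map_map]
  exact List.map_congr_left fun d hd => arcColoring_of_rel hD (hp d hd)

lemma isProperWalk_arcColoring : IsProperWalk (arcColoring A D) p := by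
  have := List.isChain_map_of_isChain (side A) (fun _ _ => side_ne_of_adj)
    p.isChain_adj_support.tail
  rwa [← map_arcColoring_edges hD p hp, List.isChain_map] at this

lemma head?_map_arcColoring_ne (hne : ¬ p.Nil) :
    p.edges.head?.map (arcColoring A D) ≠ some (side A u) := by
  cases p with
  | nil => exact absurd .nil hne
  | cons h q =>
    rw [Walk.edges_cons, List.head?_cons, Option.map_some,
      arcColoring_of_rel hD (hp _ List.mem_cons_self)]
    exact fun h' => side_ne_of_adj h (Option.some_injective _ h').symm

lemma getLast?_map_arcColoring (hne : ¬ p.Nil) :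
    p.edges.getLast?.map (arcColoring A D) = some (side A v) := by
  rw [← List.getLast?_map, map_arcColoring_edges hD p hp, List.getLast?_map,
    ← Walk.support_tail_of_not_nil p hne, List.getLast?_eq_some_getLast (Walk.support_ne_nil _),
    Walk.getLast_support, Option.map_some]

end DirectedWalk

lemma _root_.IsProperWalk.reverse {α : Type*} {c : Sym2 V → α} {u v : V} {p : G.Walk u v}
    (hp : IsProperWalk c p) : IsProperWalk c p.reverse := by
  rw [isProperWalk_iff_s7, Walk.edges_reverse, List.isChain_reverse]
  exact hp.imp fun _ _ h => h.symm

lemma IsStrongOrientationOn.exists_isPath [Fintype V]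
    (hD : IsStrongOrientationOn (G.cutGraph A) univ D) (u v : V) :
    ∃ p : G.Walk u v, p.IsPath ∧ IsProperWalk (arcColoring A D) p ∧
      (u ≠ v → p.edges.head?.map (arcColoring A D) ≠ some (side A u) ∧
        p.edges.getLast?.map (arcColoring A D) = some (side A v)) := by
  obtain ⟨p, hp, hpD⟩ := exists_isPath_of_reflTransGen hD.adj (hD.reach (mem_univ u) (mem_univ v))
  refine ⟨p.mapLe (cutGraph_le A), hp.mapLe _, ?_, fun huv => ?_⟩
  · rw [isProperWalk_iff_s7, Walk.edges_mapLe_eq_edges]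
    exact isProperWalk_arcColoring hD.asymm p hpD
  · rw [Walk.edges_mapLe_eq_edges]
    exact ⟨head?_map_arcColoring_ne hD.asymm p hpD (Walk.not_nil_of_ne huv),
      getLast?_map_arcColoring hD.asymm p hpD (Walk.not_nil_of_ne huv)⟩

/-- Follow `D` from `u` to `v`, and backwards along `D` from `v` to `u`. -/
theorem IsStrongOrientationOn.hasStrongProp [Fintype V]
    (hD : IsStrongOrientationOn (G.cutGraph A) univ D) : HasStrongProp G (arcColoring A D) := by
  refine ⟨fun u v => ?_, fun u v huv => ?_⟩
  · obtain ⟨p, hp, hpc, -⟩ := hD.exists_isPath u v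
    exact ⟨p, hp, hpc⟩
  obtain ⟨p, hp, hpc, hp'⟩ := hD.exists_isPath u v
  obtain ⟨q, hq, hqc, hq'⟩ := hD.exists_isPath v u
  obtain ⟨hphead, hplast⟩ := hp' huv
  obtain ⟨hqhead, hqlast⟩ := hq' huv.symm
  refine ⟨p, q.reverse, hp, hq.reverse, hpc, hqc.reverse, ?_, ?_⟩
  · rwa [Walk.edges_reverse, List.head?_reverse, hqlast]
  · rw [Walk.edges_reverse, List.getLast?_reverse, hplast]
    exact hqhead.symm

end Coloring

lemma two_le_of_isProperConnColoring {G : SimpleGraph V} (hG : G ≠ ⊤) {k : ℕ}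
    {c : Sym2 V → Fin k} (hc : IsProperConnColoring G c) : 2 ≤ k := by
  obtain ⟨u, v, huv, hadj⟩ := ne_top_iff_exists_not_adj.mp hG
  obtain ⟨p, -, hp⟩ := hc u v
  cases p with
  | nil => exact absurd rfl huv
  | cons h q =>
    cases q with
    | nil => exact absurd h hadj
    | cons =>
      exact Fin.nontrivial_iff_two_le.mp ⟨_, _, (List.isChain_cons_cons.mp hp).1⟩

lemma pc_eq_two {G : SimpleGraph V} (hG : G ≠ ⊤) {c : Sym2 V → Fin 2}
    (hc : IsProperConnColoring G c) : pc G = 2 :=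
  le_antisymm (Nat.sInf_le ⟨c, hc⟩)
    (le_csInf ⟨2, c, hc⟩ fun _ ⟨_, hc'⟩ => two_le_of_isProperConnColoring hG hc')

end SimpleGraph

theorem stmt_7 [Fintype V] (G : SimpleGraph V) (h3c : KConnected 3 G) (hnc : G ≠ ⊤) :
    pc G = 2 ∧ ∃ c : Sym2 V → Fin 2, HasStrongProp G c := by
  obtain ⟨A, hA⟩ := G.exists_isMaxCut
  obtain ⟨D, hD⟩ := exists_isStrongOrientationOn_univ (hA.isEdgeConnected_two_cutGraph h3c)
  have hc := hD.hasStrongProp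
  exact ⟨pc_eq_two hnc hc.1, _, hc⟩
end

section
/- Let G be a graph on n vertices with δ(G) ≥ (n+2)/2. Then G is panconnected: between any pair of distinct vertices there exists a path of every length from 2 to n−1. -/
open SimpleGraph

variable {V : Type*}

/-!
Every two vertices satisfy `d a + d b ≥ n + 2`, so any two neighbourhoods share at least two
vertices; this gives the paths of length 2 and 3 directly.

For length `n - 1`, Ore's closure argument shows that `G` is Hamilton-connected: if `G + ab` has a
Hamiltonian `u`–`v` path `x₀ … x_N` through the new edge `x_a x_{a+1}`, then for no `j` are both
`x_a x_j` and `x_{a+1} x_{j+1}` edges (reversing the segment between them would avoid `ab`), which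
forces `d x_a + d x_{a+1} ≤ n`.

The other lengths come by shortening one step at a time. If a `u`–`v` path `x₀ … x_m`, `m ≥ 5`,
cannot be shortened by one, the same count applied to the path with `x₁` (resp. `x₄`) deleted
bounds the on-path degrees of `x₀, x₂` (resp. `x₃, x₅`) by `m + 2`, while `x₀, x₃` and `x₂, x₅`
have no common neighbour off the path (it could replace the two path vertices between them).
Hence `d x₀ + d x₂ + d x₃ + d x₅ ≤ 2n + 2`, although `x₀ ≁ x₂` and `x₃ ≁ x₅` and the degree
condition give `2n + 4`.
-/

open Finset

namespace SimpleGraph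

variable {G : SimpleGraph V}

theorem card_filter_le_card_filter_skip_add_one (P : ℕ → Prop) [DecidablePred P] {k m : ℕ}
    (hkm : k ≤ m) :
    #{j ∈ range (m + 1) | P j} ≤ #{j ∈ range m | P (if j < k then j else j + 1)} + 1 := by
  let δ : ℕ → ℕ := fun j => if j < k then j else j + 1
  calc _ ≤ #(insert k ({j ∈ range m | P (δ j)}.image δ)) := card_le_card fun j hj => by
        simp only [mem_insert, mem_image, mem_filter, mem_range] at hj ⊢
        rcases lt_trichotomy j k with h | rfl | h
        · exact Or.inr ⟨j, ⟨⟨by omega, by simpa [δ, h] using hj.2⟩, by simp [δ, h]⟩⟩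
        · exact Or.inl rfl
        · refine Or.inr ⟨j - 1, ⟨⟨by omega, ?_⟩, ?_⟩⟩ <;>
            simp only [δ, if_neg (show ¬j - 1 < k by omega), Nat.sub_add_cancel (by omega : 1 ≤ j)]
          exact hj.2
    _ ≤ _ := (card_insert_le _ _).trans (Nat.add_le_add_right card_image_le 1)

section Sequence

variable {x : ℕ → V} {m : ℕ}

theorem injOn_range_of_injOn_Iic (hx : Set.InjOn x (Set.Iic m)) :
    Set.InjOn x (range (m + 1)) := fun _ hi _ hj h =>
  hx (by simpa [Nat.lt_succ_iff] using hi) (by simpa [Nat.lt_succ_iff] using hj) h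

theorem exists_walk_support_eq {l : List V} (hl : l.IsChain G.Adj) {u v : V}
    (hu : l.head? = some u) (hv : l.getLast? = some v) :
    ∃ p : G.Walk u v, p.support = l := by
  have hne : l ≠ [] := by rintro rfl; simp at hu
  refine ⟨(Walk.ofSupport l hne hl).copy ?_ ?_, by rw [Walk.support_copy, Walk.support_ofSupport]⟩
  · simpa [List.head?_eq_some_head hne] using hu
  · simpa [List.getLast?_eq_some_getLast hne] using hv

theorem exists_isPath_of_injOn {u v : V} (hx : Set.InjOn x (Set.Iic m))
    (hadj : ∀ i < m, G.Adj (x i) (x (i + 1))) (hu : x 0 = u) (hv : x m = v) :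
    ∃ p : G.Walk u v, p.IsPath ∧ p.length = m := by
  have hchain : ((List.range (m + 1)).map x).IsChain G.Adj := by
    rw [List.isChain_map, List.isChain_range_succ]
    exact hadj
  obtain ⟨p, hp⟩ := exists_walk_support_eq hchain (u := u) (v := v)
    (by simp [List.range_succ_eq_map, hu])
    (by simp [List.getLast?_range, hv])
  refine ⟨p, Walk.IsPath.mk' ?_, ?_⟩
  · rw [hp]
    exact List.Nodup.map_on (fun i hi j hj h => injOn_range_of_injOn_Iic hx
      (by simpa using hi) (by simpa using hj) h) List.nodup_range
  · simpa [hp] using p.length_support.symm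

theorem exists_isPath_of_reverse_segment (hx : Set.InjOn x (Set.Iic m)) {q s : ℕ}
    (hqs : q < s) (hsm : s < m)
    (hadj : ∀ i < m, i ≠ q → i ≠ s → G.Adj (x i) (x (i + 1)))
    (hq : G.Adj (x q) (x s)) (hs : G.Adj (x (q + 1)) (x (s + 1))) :
    ∃ p : G.Walk (x 0) (x m), p.IsPath ∧ p.length = m := by
  -- the new path is `x₀ … x_q x_s … x_{q+1} x_{s+1} … x_m`
  let σ : ℕ → ℕ := fun i => if q < i ∧ i ≤ s then q + 1 + s - i else i
  have hσinj : Set.InjOn (x ∘ σ) (Set.Iic m) := by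
    intro i hi j hj h
    simp only [Set.mem_Iic, σ, Function.comp_apply] at hi hj h
    have := hx (by simp only [Set.mem_Iic]; split_ifs <;> omega)
      (by simp only [Set.mem_Iic]; split_ifs <;> omega) h
    split_ifs at this <;> omega
  refine exists_isPath_of_injOn hσinj (fun i hi => ?_) (by simp [σ])
    (by simp only [σ, Function.comp_apply]; rw [if_neg (by omega)])
  simp only [σ, Function.comp_apply]
  rcases lt_trichotomy i q with h | rfl | h
  · rw [if_neg (by omega), if_neg (by omega)]
    exact hadj i hi (by omega) (by omega)
  · rw [if_neg (by omega), if_pos (by omega), show i + 1 + s - (i + 1) = s by omega]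
    exact hq
  rcases lt_trichotomy i s with h' | rfl | h'
  · rw [if_pos (by omega), if_pos (by omega), show q + 1 + s - i = q + 1 + s - (i + 1) + 1 by omega]
    exact (hadj _ (by omega) (by omega) (by omega)).symm
  · rw [if_pos (by omega), if_neg (by omega), show q + 1 + i - i = q + 1 by omega]
    exact hs
  · rw [if_neg (by omega), if_neg (by omega)]
    exact hadj i hi (by omega) (by omega)

theorem exists_isPath_of_adj_of_adj_of_notMem (hx : Set.InjOn x (Set.Iic m))
    (hadj : ∀ i < m, G.Adj (x i) (x (i + 1))) {a : ℕ} (ha : a + 3 ≤ m) {z : V}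
    (hz : ∀ i ≤ m, x i ≠ z) (hza : G.Adj (x a) z) (hzb : G.Adj z (x (a + 3))) :
    ∃ p : G.Walk (x 0) (x m), p.IsPath ∧ p.length + 1 = m := by
  -- `y` replaces `x_{a+1} x_{a+2}` by `z`
  let y : ℕ → V := fun i => if i ≤ a then x i else if i = a + 1 then z else x (i + 1)
  have hyinj : Set.InjOn y (Set.Iic (m - 1)) := by
    intro i hi j hj h
    simp only [Set.mem_Iic, y] at hi hj h
    split_ifs at h <;>
      first
      | omega
      | exact absurd h (hz _ (by omega))
      | exact absurd h.symm (hz _ (by omega))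
      | have := hx (by simp only [Set.mem_Iic]; omega) (by simp only [Set.mem_Iic]; omega) h; omega
  have hy_le : ∀ i ≤ a, y i = x i := fun i hi => if_pos hi
  have hy_z : y (a + 1) = z := by simp [y]
  have hy_gt : ∀ i, a + 1 < i → y i = x (i + 1) := fun i hi => by
    simp only [y]; rw [if_neg (by omega), if_neg (by omega)]
  have hyadj : ∀ i < m - 1, G.Adj (y i) (y (i + 1)) := by
    intro i hi
    rcases lt_trichotomy i a with h | rfl | h
    · rw [hy_le i h.le, hy_le (i + 1) h]
      exact hadj i (by omega)
    · rw [hy_le i le_rfl, hy_z]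
      exact hza
    rcases eq_or_ne i (a + 1) with rfl | h'
    · rw [hy_z, hy_gt _ (by omega)]
      exact hzb
    · rw [hy_gt i (by omega), hy_gt (i + 1) (by omega)]
      exact hadj (i + 1) (by omega)
  obtain ⟨p, hp, hlen⟩ := exists_isPath_of_injOn (u := x 0) (v := x m) hyinj hyadj
    (hy_le 0 (Nat.zero_le a)) (by rw [hy_gt _ (by omega)]; congr 1; omega)
  exact ⟨p, hp, by omega⟩

theorem not_adj_and_card_filter_adj_add_le [DecidableRel G.Adj] (hx : Set.InjOn x (Set.Iic m))
    {a : ℕ} (ha : a < m) (hadj : ∀ i < m, i ≠ a → G.Adj (x i) (x (i + 1)))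
    (hno : ¬∃ p : G.Walk (x 0) (x m), p.IsPath ∧ p.length = m) :
    ¬G.Adj (x a) (x (a + 1)) ∧
      #{j ∈ range (m + 1) | G.Adj (x a) (x j)} +
        #{j ∈ range (m + 1) | G.Adj (x (a + 1)) (x j)} ≤ m + 1 := by
  refine ⟨fun h => hno (exists_isPath_of_injOn hx (fun i hi => ?_) rfl rfl), ?_⟩
  · rcases eq_or_ne i a with rfl | h'
    exacts [h, hadj i hi h']
  have hcross : ∀ j < m, ¬(G.Adj (x a) (x j) ∧ G.Adj (x (a + 1)) (x (j + 1))) := by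
    rintro j hj ⟨h1, h2⟩
    rcases lt_trichotomy j a with h | rfl | h
    · exact hno (exists_isPath_of_reverse_segment hx h ha
        (fun i hi _ hia => hadj i hi hia) h1.symm h2.symm)
    · exact h1.ne rfl
    · exact hno (exists_isPath_of_reverse_segment hx h hj
        (fun i hi hia _ => hadj i hi hia) h1 h2)
  set S := {j ∈ range m | G.Adj (x a) (x j)}
  set T := {j ∈ range m | G.Adj (x (a + 1)) (x (j + 1))}
  have hST : #S + #T ≤ m - 1 := by
    rw [← card_union_of_disjoint
      (disjoint_filter.2 fun j hj h1 h2 => hcross j (mem_range.1 hj) ⟨h1, h2⟩)]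
    calc #(S ∪ T) ≤ #((range m).erase a) := card_le_card fun j hj => by
          simp only [S, T, mem_union, mem_filter, mem_range, mem_erase] at hj ⊢
          refine ⟨?_, by tauto⟩
          rintro rfl
          rcases hj with ⟨_, h⟩ | ⟨_, h⟩ <;> exact h.ne rfl
      _ = m - 1 := by rw [card_erase_of_mem (mem_range.2 ha), card_range]
  have hS : #{j ∈ range (m + 1) | G.Adj (x a) (x j)} ≤ #S + 1 :=
    calc _ ≤ #(insert m S) := card_le_card fun j hj => by
          simp only [S, mem_insert, mem_filter, mem_range] at hj ⊢
          rcases (Nat.lt_succ_iff_lt_or_eq.1 hj.1) with h | h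
          exacts [Or.inr ⟨h, hj.2⟩, Or.inl h]
      _ ≤ #S + 1 := card_insert_le _ _
  have hT : #{j ∈ range (m + 1) | G.Adj (x (a + 1)) (x j)} ≤ #T + 1 :=
    calc _ ≤ #(insert 0 (T.image (· + 1))) := card_le_card fun j hj => by
          simp only [T, mem_insert, mem_image, mem_filter, mem_range] at hj ⊢
          rcases j with _ | j
          · exact Or.inl rfl
          · exact Or.inr ⟨j, ⟨by omega, hj.2⟩, rfl⟩
      _ ≤ #T + 1 := (card_insert_le _ _).trans (Nat.add_le_add_right card_image_le 1)
  omega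

theorem not_adj_and_card_filter_adj_add_le_of_skip [DecidableRel G.Adj]
    (hx : Set.InjOn x (Set.Iic m)) (hadj : ∀ i < m, G.Adj (x i) (x (i + 1))) {k : ℕ}
    (hk : 0 < k) (hkm : k < m) (hno : ¬∃ p : G.Walk (x 0) (x m), p.IsPath ∧ p.length + 1 = m) :
    ¬G.Adj (x (k - 1)) (x (k + 1)) ∧
      #{j ∈ range (m + 1) | G.Adj (x (k - 1)) (x j)} +
        #{j ∈ range (m + 1) | G.Adj (x (k + 1)) (x j)} ≤ m + 2 := by
  -- `x ∘ δ` is the sequence with `x_k` deleted; only its edge at position `k - 1` may be missing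
  let δ : ℕ → ℕ := fun i => if i < k then i else i + 1
  have hyinj : Set.InjOn (x ∘ δ) (Set.Iic (m - 1)) := by
    intro i hi j hj h
    simp only [Set.mem_Iic, δ, Function.comp_apply] at hi hj h
    have := hx (by simp only [Set.mem_Iic]; split_ifs <;> omega)
      (by simp only [Set.mem_Iic]; split_ifs <;> omega) h
    split_ifs at this <;> omega
  have hyadj : ∀ i < m - 1, i ≠ k - 1 → G.Adj ((x ∘ δ) i) ((x ∘ δ) (i + 1)) := by
    intro i hi hik
    simp only [δ, Function.comp_apply]
    split_ifs <;> first | omega | exact hadj _ (by omega)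
  have hδ₀ : δ 0 = 0 := if_pos hk
  have hδₘ : δ (m - 1) = m := by simp only [δ]; rw [if_neg (by omega)]; omega
  have hno' : ¬∃ p : G.Walk ((x ∘ δ) 0) ((x ∘ δ) (m - 1)), p.IsPath ∧ p.length = m - 1 := by
    rw [Function.comp_apply, Function.comp_apply, hδ₀, hδₘ]
    rintro ⟨p, hp, hlen⟩
    exact hno ⟨p, hp, by omega⟩
  obtain ⟨hna, hcard⟩ := not_adj_and_card_filter_adj_add_le hyinj (by omega) hyadj hno'
  have hδ₁ : δ (k - 1) = k - 1 := if_pos (by omega)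
  have hδ₂ : δ (k - 1 + 1) = k + 1 := by simp only [δ]; rw [if_neg (by omega)]; omega
  simp only [Function.comp_apply, hδ₁, hδ₂, Nat.sub_add_cancel (show 1 ≤ m by omega)] at hna hcard
  have hskip : ∀ w, #{j ∈ range (m + 1) | G.Adj w (x j)} ≤
      #{j ∈ range m | G.Adj w (x (δ j))} + 1 :=
    fun w => card_filter_le_card_filter_skip_add_one (fun j => G.Adj w (x j)) hkm.le
  exact ⟨hna, by linarith [hskip (x (k - 1)), hskip (x (k + 1))]⟩

theorem degree_eq_card_filter_adj_add_card_sdiff [Fintype V] [DecidableEq V] [DecidableRel G.Adj]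
    (hx : Set.InjOn x (Set.Iic m)) (w : V) :
    G.degree w = #{j ∈ range (m + 1) | G.Adj w (x j)} +
      #(G.neighborFinset w \ (range (m + 1)).image x) := by
  rw [← card_neighborFinset_eq_degree,
    ← card_inter_add_card_sdiff (G.neighborFinset w) ((range (m + 1)).image x)]
  congr 1
  rw [← card_image_of_injOn ((injOn_range_of_injOn_Iic hx).mono (coe_subset.2 (filter_subset _ _)))]
  congr 1
  ext v
  simp only [mem_inter, mem_neighborFinset, mem_image, mem_filter]
  constructor
  · rintro ⟨hv, j, hj, rfl⟩
    exact ⟨j, ⟨hj, hv⟩, rfl⟩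
  · rintro ⟨j, ⟨hj, hv⟩, rfl⟩
    exact ⟨hv, j, hj, rfl⟩

theorem card_sdiff_add_card_sdiff_add_le [Fintype V] [DecidableEq V] [DecidableRel G.Adj]
    (hx : Set.InjOn x (Set.Iic m)) {v w : V}
    (h : ∀ z, G.Adj v z → G.Adj z w → ∃ i ≤ m, x i = z) :
    #(G.neighborFinset v \ (range (m + 1)).image x) +
      #(G.neighborFinset w \ (range (m + 1)).image x) + (m + 1) ≤ Fintype.card V := by
  set P := (range (m + 1)).image x
  have hP : #P = m + 1 := by
    rw [card_image_of_injOn (injOn_range_of_injOn_Iic hx), card_range]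
  have hvw : Disjoint (G.neighborFinset v \ P) (G.neighborFinset w \ P) := by
    refine Finset.disjoint_left.2 fun z hv hw => (mem_sdiff.1 hv).2 ?_
    obtain ⟨i, hi, rfl⟩ := h z ((mem_neighborFinset _ _ _).1 (mem_sdiff.1 hv).1)
      ((mem_neighborFinset _ _ _).1 (mem_sdiff.1 hw).1).symm
    exact mem_image.2 ⟨i, mem_range.2 (by omega), rfl⟩
  rw [← hP, ← card_union_of_disjoint hvw, ← card_union_of_disjoint]
  · exact card_le_univ _
  · exact disjoint_union_left.2 ⟨sdiff_disjoint, sdiff_disjoint⟩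

theorem exists_isPath_of_card_add_one_le_degree_add [Fintype V] [DecidableEq V]
    [DecidableRel G.Adj] (hx : Set.InjOn x (Set.Iic m)) (hxuniv : (range (m + 1)).image x = univ)
    {a : ℕ} (ha : a < m) (hadj : ∀ i < m, i ≠ a → G.Adj (x i) (x (i + 1)))
    (hdeg : Fintype.card V + 1 ≤ G.degree (x a) + G.degree (x (a + 1))) :
    ∃ p : G.Walk (x 0) (x m), p.IsPath ∧ p.length = m := by
  by_contra hno
  obtain ⟨-, hcard⟩ := not_adj_and_card_filter_adj_add_le hx ha hadj hno
  have hm : m + 1 ≤ Fintype.card V := by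
    rw [← card_range (m + 1), ← card_image_of_injOn (injOn_range_of_injOn_Iic hx), hxuniv,
      card_univ]
  simp only [degree_eq_card_filter_adj_add_card_sdiff hx, hxuniv,
    sdiff_eq_empty_iff_subset.2 (subset_univ _), card_empty, add_zero] at hdeg
  omega

end Sequence

theorem exists_isHamiltonian_top [Fintype V] [DecidableEq V] {u v : V} (huv : u ≠ v) :
    ∃ p : (⊤ : SimpleGraph V).Walk u v, p.IsHamiltonian := by
  let l := u :: (((univ.erase u).erase v).toList ++ [v])
  have hnd : l.Nodup := by
    simp only [l, List.nodup_cons, List.nodup_append, List.mem_append, mem_toList, mem_erase,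
      List.mem_singleton, nodup_toList]
    grind
  obtain ⟨p, hp⟩ := exists_walk_support_eq (hnd.isChain.imp fun _ _ h => (top_adj _ _).2 h)
    (u := u) (v := v) rfl
    (by simp only [l]; rw [← List.cons_append, List.getLast?_concat])
  refine ⟨p, (Walk.IsPath.mk' (hp ▸ hnd)).isHamiltonian_of_mem fun w => ?_⟩
  rw [hp]
  by_cases hu : w = u
  · simp [l, hu]
  by_cases hv : w = v
  · simp [l, hv]
  · simp [l, hu, hv]

theorem exists_isHamiltonian_of_sup_edge [Fintype V] [DecidableEq V] [DecidableRel G.Adj]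
    {a b u v : V} (hab : Fintype.card V + 1 ≤ G.degree a + G.degree b)
    {p : (G ⊔ edge a b).Walk u v} (hp : p.IsHamiltonian) :
    ∃ q : G.Walk u v, q.IsHamiltonian := by
  let x := p.getVert
  let N := p.length
  have hx : Set.InjOn x (Set.Iic N) := hp.isPath.getVert_injOn
  have hx₀ : x 0 = u := p.getVert_zero
  have hxₙ : x N = v := p.getVert_length
  suffices ∃ q : G.Walk u v, q.IsPath ∧ q.length = N by
    obtain ⟨q, hq, hlen⟩ := this
    exact ⟨q, Walk.isHamiltonian_iff_isPath_and_length_eq.2 ⟨hq, hlen.trans hp.length_eq⟩⟩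
  by_cases hall : ∀ i < N, G.Adj (x i) (x (i + 1))
  · exact exists_isPath_of_injOn hx hall hx₀ hxₙ
  push Not at hall
  obtain ⟨i, hi, hni⟩ := hall
  have hedge : ∀ j < N, ¬G.Adj (x j) (x (j + 1)) → s(x j, x (j + 1)) = s(a, b) := by
    intro j hj h
    have := p.adj_getVert_succ hj
    rw [sup_adj, edge_adj] at this
    rcases this with h' | ⟨h' | h', -⟩
    · exact absurd h' h
    · simp only [x, h'.1, h'.2]
    · simp only [x, h'.1, h'.2, Sym2.eq_swap]
  have hadj : ∀ j < N, j ≠ i → G.Adj (x j) (x (j + 1)) := by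
    intro j hj hji
    by_contra h
    rcases Sym2.eq_iff.1 ((hedge j hj h).trans (hedge i hi hni).symm) with ⟨h₁, -⟩ | ⟨h₁, h₂⟩
    · exact hji (hx (Set.mem_Iic.2 hj.le) (Set.mem_Iic.2 hi.le) h₁)
    · have := hx (Set.mem_Iic.2 hj.le) (Set.mem_Iic.2 hi) h₁
      have := hx (Set.mem_Iic.2 hj) (Set.mem_Iic.2 hi.le) h₂
      omega
  have hdeg : G.degree (x i) + G.degree (x (i + 1)) = G.degree a + G.degree b := by
    rcases Sym2.eq_iff.1 (hedge i hi hni) with ⟨h₁, h₂⟩ | ⟨h₁, h₂⟩ <;> rw [h₁, h₂]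
    exact add_comm _ _
  have hxuniv : (range (N + 1)).image x = univ := by
    refine eq_univ_of_forall fun w => ?_
    obtain ⟨j, hj, hjN⟩ := Walk.mem_support_iff_exists_getVert.1 (hp.mem_support w)
    exact mem_image.2 ⟨j, mem_range.2 (by omega), hj⟩
  rw [← hx₀, ← hxₙ]
  exact exists_isPath_of_card_add_one_le_degree_add hx hxuniv hi hadj (hdeg ▸ hab)

theorem exists_isHamiltonian_of_ore [Fintype V] [DecidableEq V] [DecidableRel G.Adj]
    (hG : ∀ a b, a ≠ b → ¬G.Adj a b → Fintype.card V + 1 ≤ G.degree a + G.degree b)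
    {u v : V} (huv : u ≠ v) : ∃ p : G.Walk u v, p.IsHamiltonian := by
  suffices key : ∀ H : SimpleGraph V, ∀ [DecidableRel H.Adj],
      (∀ a b, a ≠ b → ¬H.Adj a b → Fintype.card V + 1 ≤ H.degree a + H.degree b) →
      ∃ p : H.Walk u v, p.IsHamiltonian from key G hG
  intro H
  induction H using WellFoundedGT.induction with
  | _ H ih =>
  intro _ hH
  by_cases htop : H = ⊤
  · subst htop
    exact exists_isHamiltonian_top huv
  obtain ⟨a, b, hab, hnab⟩ : ∃ a b, a ≠ b ∧ ¬H.Adj a b := by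
    by_contra! h
    exact htop (eq_top_iff.2 fun a b hab => h a b hab)
  have hle : H ≤ H ⊔ edge a b := le_sup_left
  obtain ⟨p, hp⟩ := ih _ (lt_sup_edge H a b hab hnab) fun c d hcd hncd =>
    (hH c d hcd fun h => hncd (hle h)).trans
      (add_le_add (degree_le_of_le hle) (degree_le_of_le hle))
  exact exists_isHamiltonian_of_sup_edge (hH a b hab hnab) hp

theorem degree_add_degree_le_card_add_card_inter [Fintype V] [DecidableEq V] [DecidableRel G.Adj]
    (a b : V) :
    G.degree a + G.degree b ≤ Fintype.card V + #(G.neighborFinset a ∩ G.neighborFinset b) := by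
  rw [← card_neighborFinset_eq_degree, ← card_neighborFinset_eq_degree, ← card_union_add_card_inter]
  exact Nat.add_le_add_right (card_le_univ _) _

theorem exists_isPath_length_two [Fintype V] [DecidableRel G.Adj] {u v : V} (huv : u ≠ v)
    (h : Fintype.card V + 1 ≤ G.degree u + G.degree v) :
    ∃ p : G.Walk u v, p.IsPath ∧ p.length = 2 := by
  classical
  obtain ⟨w, hw⟩ := card_pos.1 (by linarith [degree_add_degree_le_card_add_card_inter (G := G) u v] :
    0 < #(G.neighborFinset u ∩ G.neighborFinset v))
  simp only [mem_inter, mem_neighborFinset] at hw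
  exact ⟨.cons hw.1 (.cons hw.2.symm .nil), by simp [huv, hw.1.ne, hw.2.ne'], rfl⟩

theorem exists_isPath_length_three [Fintype V] [DecidableRel G.Adj]
    (hG : ∀ a b, Fintype.card V + 2 ≤ G.degree a + G.degree b) {u v : V} (huv : u ≠ v) :
    ∃ p : G.Walk u v, p.IsPath ∧ p.length = 3 := by
  classical
  have huv' := degree_add_degree_le_card_add_card_inter (G := G) u v
  obtain ⟨a, ha⟩ := card_pos.1 (by linarith [hG u v] :
    0 < #(G.neighborFinset u ∩ G.neighborFinset v))
  simp only [mem_inter, mem_neighborFinset] at ha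
  have hua := degree_add_degree_le_card_add_card_inter (G := G) u a
  obtain ⟨b, hb, hbv⟩ := exists_mem_ne (by linarith [hG u a] :
    1 < #(G.neighborFinset u ∩ G.neighborFinset a)) v
  simp only [mem_inter, mem_neighborFinset] at hb
  exact ⟨.cons hb.1 (.cons hb.2.symm (.cons ha.2.symm .nil)),
    by simp [huv, hbv, ha.1.ne, hb.1.ne, hb.2.ne', ha.2.ne'], rfl⟩

theorem exists_isPath_length_add_one_eq [Fintype V] [DecidableRel G.Adj]
    (hG : ∀ a b, a ≠ b → ¬G.Adj a b → Fintype.card V + 2 ≤ G.degree a + G.degree b)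
    {u v : V} {p : G.Walk u v} (hp : p.IsPath) (hm : 5 ≤ p.length) :
    ∃ q : G.Walk u v, q.IsPath ∧ q.length + 1 = p.length := by
  classical
  let x := p.getVert
  let m := p.length
  have hx : Set.InjOn x (Set.Iic m) := hp.getVert_injOn
  have hadj : ∀ i < m, G.Adj (x i) (x (i + 1)) := fun i hi => p.adj_getVert_succ hi
  by_contra hno
  replace hno : ¬∃ q : G.Walk (x 0) (x m), q.IsPath ∧ q.length + 1 = m := by
    rwa [show x 0 = u from p.getVert_zero, show x m = v from p.getVert_length]
  have hoff : ∀ a, a + 3 ≤ m → #(G.neighborFinset (x a) \ (range (m + 1)).image x) +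
      #(G.neighborFinset (x (a + 3)) \ (range (m + 1)).image x) + (m + 1) ≤ Fintype.card V :=
    fun a ha => card_sdiff_add_card_sdiff_add_le hx fun z h₁ h₂ => by
      by_contra! hz
      exact hno (exists_isPath_of_adj_of_adj_of_notMem hx hadj ha hz h₁ h₂)
  obtain ⟨h₀₂, hc₀₂⟩ := not_adj_and_card_filter_adj_add_le_of_skip hx hadj (k := 1)
    (by omega) (by omega) hno
  obtain ⟨h₃₅, hc₃₅⟩ := not_adj_and_card_filter_adj_add_le_of_skip hx hadj (k := 4)
    (by omega) (by omega) hno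
  have hne : ∀ i j, i ≤ m → j ≤ m → i ≠ j → x i ≠ x j := fun i j hi hj hij h => hij (hx hi hj h)
  have h₁ := hG _ _ (hne 0 2 (by omega) (by omega) (by omega)) h₀₂
  have h₂ := hG _ _ (hne 3 5 (by omega) (by omega) (by omega)) h₃₅
  simp only [degree_eq_card_filter_adj_add_card_sdiff hx] at h₁ h₂
  have h₀₃ := hoff 0 (by omega)
  have h₂₅ := hoff 2 (by omega)
  simp only [Nat.reduceAdd, Nat.reduceSub] at hc₀₂ hc₃₅ h₀₃ h₂₅
  omega

theorem exists_isPath_length_of_le [Fintype V] [DecidableRel G.Adj]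
    (hG : ∀ a b, a ≠ b → ¬G.Adj a b → Fintype.card V + 2 ≤ G.degree a + G.degree b)
    {u v : V} {m : ℕ} (h : ∃ p : G.Walk u v, p.IsPath ∧ p.length = m) {ℓ : ℕ} (hℓ : 4 ≤ ℓ)
    (hℓm : ℓ ≤ m) : ∃ p : G.Walk u v, p.IsPath ∧ p.length = ℓ := by
  induction m with
  | zero => omega
  | succ m ih =>
    obtain rfl | hlt := hℓm.eq_or_lt
    · exact h
    obtain ⟨p, hp, hlen⟩ := h
    obtain ⟨q, hq, hqlen⟩ := exists_isPath_length_add_one_eq hG hp (by omega)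
    exact ih ⟨q, hq, by omega⟩ (by omega)

end SimpleGraph

theorem stmt_13 [Fintype V] (G : SimpleGraph V) [DecidableRel G.Adj]
    (hδ : ((Fintype.card V : ℝ) + 2) / 2 ≤ G.minDegree) :
    ∀ u v : V, u ≠ v → ∀ ℓ : ℕ, 2 ≤ ℓ → ℓ ≤ Fintype.card V - 1 →
      ∃ p : G.Walk u v, p.IsPath ∧ p.length = ℓ := by
  intro u v huv ℓ hℓ₂ hℓn
  classical
  have hG : ∀ a b : V, Fintype.card V + 2 ≤ G.degree a + G.degree b := by
    have : Fintype.card V + 2 ≤ 2 * G.minDegree := by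
      exact_mod_cast (by linarith : (Fintype.card V : ℝ) + 2 ≤ 2 * G.minDegree)
    intro a b
    linarith [G.minDegree_le_degree a, G.minDegree_le_degree b]
  obtain rfl | rfl | hℓ₄ : ℓ = 2 ∨ ℓ = 3 ∨ 4 ≤ ℓ := by omega
  · exact exists_isPath_length_two huv (by linarith [hG u v])
  · exact exists_isPath_length_three hG huv
  · obtain ⟨p, hp⟩ := exists_isHamiltonian_of_ore (fun a b _ _ => by linarith [hG a b]) huv
    exact exists_isPath_length_of_le (fun a b _ _ => hG a b) ⟨p, hp.isPath, hp.length_eq⟩ hℓ₄ hℓn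
end

section
/- Let G be a graph on n vertices. If δ(G) ≥ (n+1)/2, then G is Hamilton-connected, i.e., between any two distinct vertices there is a Hamilton (spanning) path. -/
open SimpleGraph

variable {V : Type*}

/-!
Ore-type closure argument. Let `x, y` be non-adjacent with `deg x + deg y > n`, and let `P` be
a Hamiltonian `u`–`v` path of `G + xy` through the edge `xy`. Counting the neighbours of `x` and
of `y` along `P` gives a consecutive pair `a b` of `P` with `a ~ x` and `b ~ y`; reversing the
segment of `P` between `x y` and `a b` gives a Hamiltonian `u`–`v` path of `G`. Adding such edges
one at a time preserves the degree condition and ends in a complete graph, which is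
Hamilton-connected, and `δ(G) ≥ (n + 1) / 2` gives `deg x + deg y > n` for all `x, y`.
-/

namespace List

variable {α : Type*}

theorem IsChain.append_reverse_append {r : α → α → Prop} [Std.Symm r] {X M Y : List α}
    (hX : X.IsChain r) (hM : M.IsChain r) (hY : Y.IsChain r) (hMne : M ≠ [])
    (hXM : ∀ a ∈ X.getLast?, ∀ b ∈ M.getLast?, r a b)
    (hMY : ∀ a ∈ M.head?, ∀ b ∈ Y.head?, r a b) :
    (X ++ M.reverse ++ Y).IsChain r := by
  have hM' : M.reverse.IsChain r := isChain_reverse.2 (hM.imp fun _ _ h => Std.Symm.symm _ _ h)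
  refine isChain_append.2 ⟨isChain_append.2 ⟨hX, hM', by simpa using hXM⟩, hY, ?_⟩
  rwa [getLast?_append_of_ne_nil _ (by simpa using hMne), getLast?_reverse]

theorem Nodup.length_eq_card [Fintype α] {l : List α} (hl : l.Nodup) (hmem : ∀ a, a ∈ l) :
    l.length = Fintype.card α := by
  classical
  rw [← toFinset_card_of_nodup hl, Finset.eq_univ_of_forall fun a => mem_toFinset.2 (hmem a),
    Finset.card_univ]

variable [DecidableEq α] {s t : Finset α}

theorem countP_dropLast_add_countP_tail_le :
    ∀ {l : List α}, l.IsChain (fun a b => a ∈ s → b ∉ t) →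
      l.dropLast.countP (· ∈ s) + l.tail.countP (· ∈ t) ≤ l.length - 1
  | [], _ | [_], _ => by simp
  | a :: b :: l, h => by
    have ih := countP_dropLast_add_countP_tail_le (isChain_cons_cons.1 h).2
    have hab := (isChain_cons_cons.1 h).1
    simp only [dropLast_cons_cons, tail_cons, countP_cons, length_cons] at ih ⊢
    by_cases ha : a ∈ s <;> by_cases hb : b ∈ t <;> simp_all <;> omega

theorem Nodup.countP_mem_eq_card {l : List α} (hl : l.Nodup) (hs : s ⊆ l.toFinset) :
    l.countP (· ∈ s) = s.card := by
  rw [← hl.card_eq_countP, Finset.filter_mem_eq_inter, Finset.inter_eq_right.2 hs]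

theorem exists_eq_append_cons_cons_mem_mem {l : List α} (hl : l.Nodup)
    (hs : s ⊆ l.toFinset) (ht : t ⊆ l.toFinset) {L R : List α} {x y : α}
    (hxy : l = L ++ x :: y :: R) (hx : x ∉ s) (hy : y ∉ t)
    (hcard : l.length < s.card + t.card) :
    ∃ L' R' a b, l = L' ++ a :: b :: R' ∧ a ∈ s ∧ b ∈ t := by
  by_contra! hno
  -- The pair `(x, y)` is counted on neither side, so `x` may join `s`: that is the slack of one.
  have hxl : x ∈ l := by simp [hxy]
  have hchain : l.IsChain (fun a b => a ∈ insert x s → b ∉ t) := by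
    rw [isChain_iff_forall_rel_of_append_cons_cons]
    rintro a b L' R' hl' ha
    rcases Finset.mem_insert.1 ha with rfl | ha
    · have hnd := nodup_append.1 (hl' ▸ hl)
      have hbR := (append_cons_inj_of_notMem (fun h => hnd.2.2 a h a mem_cons_self rfl)
        (nodup_cons.1 hnd.2.1).1).1 (hl'.symm.trans hxy)
      simp_all
    · exact hno L' R' a b hl' ha
  have hne : l ≠ [] := ne_nil_of_mem hxl
  have hcount := countP_dropLast_add_countP_tail_le hchain
  have h1 : l.countP (· ∈ insert x s) ≤ l.dropLast.countP (· ∈ insert x s) + 1 := by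
    conv_lhs => rw [← dropLast_append_getLast hne]
    rw [countP_append]; simp only [countP_singleton]; split <;> omega
  have h2 : l.countP (· ∈ t) ≤ l.tail.countP (· ∈ t) + 1 := by
    conv_lhs => rw [← cons_head_tail hne]
    rw [countP_cons]; split <;> omega
  rw [hl.countP_mem_eq_card (Finset.insert_subset (mem_toFinset.2 hxl) hs),
    Finset.card_insert_of_notMem hx] at h1
  rw [hl.countP_mem_eq_card ht] at h2
  have := length_pos_of_ne_nil hne
  omega

end List

namespace SimpleGraph

variable {G : SimpleGraph V}

structure IsHamiltonianList (G : SimpleGraph V) (u v : V) (l : List V) : Prop where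
  isChain : l.IsChain G.Adj
  head?_eq : l.head? = some u
  getLast?_eq : l.getLast? = some v
  nodup : l.Nodup
  mem : ∀ w, w ∈ l

theorem IsHamiltonianList.exists_isHamiltonian [DecidableEq V] {u v : V} {l : List V}
    (h : G.IsHamiltonianList u v l) : ∃ p : G.Walk u v, p.IsHamiltonian := by
  have hne : l ≠ [] := by simpa using congrArg Option.isSome h.head?_eq
  have hu : l.head hne = u := by simpa [List.head?_eq_some_head hne] using h.head?_eq
  have hv : l.getLast hne = v := by simpa [List.getLast?_eq_some_getLast hne] using h.getLast?_eq
  let p := (Walk.ofSupport l hne h.isChain).copy hu hv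
  have hp : p.support = l := by simp [p]
  exact ⟨p, (Walk.IsPath.mk' (hp ▸ h.nodup)).isHamiltonian_of_mem (hp ▸ h.mem)⟩

theorem exists_isHamiltonianList_of_forall_adj [Fintype V] (hG : ∀ x y, x ≠ y → G.Adj x y)
    {u v : V} (huv : u ≠ v) : ∃ l, G.IsHamiltonianList u v l := by
  classical
  let l := [u] ++ ((Finset.univ.erase u).erase v).toList ++ [v]
  have hnd : l.Nodup := by simp +contextual [l, List.nodup_append, huv, Finset.nodup_toList]
  refine ⟨l, hnd.isChain.imp hG, by simp [l], List.getLast?_concat, hnd, fun w => ?_⟩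
  by_cases hu : w = u <;> by_cases hv : w = v <;> simp [l, hu, hv]

theorem isHamiltonianList_append_reverse_append {u v : V} {X M Y : List V}
    (hX : X.IsChain G.Adj) (hM : M.IsChain G.Adj) (hY : Y.IsChain G.Adj) (hMne : M ≠ [])
    (hXM : ∀ a ∈ X.getLast?, ∀ b ∈ M.getLast?, G.Adj a b)
    (hMY : ∀ a ∈ M.head?, ∀ b ∈ Y.head?, G.Adj a b)
    (hu : X.head? = some u) (hv : Y.getLast? = some v)
    (hnd : (X ++ M ++ Y).Nodup) (hmem : ∀ w, w ∈ X ++ M ++ Y) :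
    G.IsHamiltonianList u v (X ++ M.reverse ++ Y) := by
  have hperm : (X ++ M.reverse ++ Y).Perm (X ++ M ++ Y) :=
    (M.reverse_perm.append_left X).append_right Y
  have := G.symm
  refine ⟨hX.append_reverse_append hM hY hMne hXM hMY, ?_, ?_, hperm.nodup_iff.2 hnd,
    fun w => hperm.mem_iff.2 (hmem w)⟩
  · simp [List.head?_append, hu]
  · simp [List.getLast?_append, hv]

theorem exists_isHamiltonianList_of_append_cons_cons [Fintype V] [DecidableRel G.Adj]
    {u v x y : V} {L R : List V} (hL : (L ++ [x]).IsChain G.Adj) (hR : (y :: R).IsChain G.Adj)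
    (hu : (L ++ [x]).head? = some u) (hv : (y :: R).getLast? = some v)
    (hnd : (L ++ x :: y :: R).Nodup) (hmem : ∀ w, w ∈ L ++ x :: y :: R)
    (hdeg : Fintype.card V < G.degree x + G.degree y) : ∃ l, G.IsHamiltonianList u v l := by
  classical
  have hsub : ∀ z, G.neighborFinset z ⊆ (L ++ x :: y :: R).toFinset := fun z w _ =>
    List.mem_toFinset.2 (hmem w)
  obtain ⟨P, Q, a, b, hPQ, ha, hb⟩ :=
    List.exists_eq_append_cons_cons_mem_mem hnd (hsub x) (hsub y) rfl (by simp) (by simp)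
      (by simpa [hnd.length_eq_card hmem] using hdeg)
  rw [mem_neighborFinset] at ha hb
  -- The pair `a b` lies before `x` or after `y`; reversing the stretch between the two pairs
  -- trades the edges `a b` and `x y` for `a x` and `b y`.
  have hsplit : (P ++ [a]) ++ b :: Q = (L ++ [x]) ++ y :: R := by simpa using hPQ.symm
  rcases List.append_eq_append_iff.1 hsplit with ⟨M, h1, h2⟩ | ⟨M, h1, h2⟩
  · have hMne : M ≠ [] := by
      rintro rfl
      simp only [List.append_nil, List.append_singleton_inj] at h1
      exact G.irrefl (h1.2 ▸ ha)
    have hMlast : M.getLast? = some x := by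
      have := congrArg List.getLast? h1
      rwa [List.getLast?_append_of_ne_nil _ hMne, List.getLast?_concat, eq_comm] at this
    have hMhead : M.head? = some b := by
      have := congrArg List.head? h2
      rwa [List.head?_append_of_ne_nil _ hMne, List.head?_cons, eq_comm] at this
    have hl : L ++ x :: y :: R = P ++ [a] ++ M ++ y :: R := by rw [← h1]; simp
    rw [h1, List.isChain_append] at hL
    rw [h1, List.head?_append_of_ne_nil _ (by simp)] at hu
    exact ⟨_, isHamiltonianList_append_reverse_append hL.1 hL.2.1 hR hMne
      (by simpa [hMlast] using ha.symm) (by simpa [hMhead] using hb.symm) hu hv (hl ▸ hnd)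
      (hl ▸ hmem)⟩
  · have hMne : M ≠ [] := by
      rintro rfl
      simp only [List.nil_append, List.cons.injEq] at h2
      exact G.irrefl (h2.1 ▸ hb)
    have hMlast : M.getLast? = some a := by
      have := congrArg List.getLast? h1
      rwa [List.getLast?_append_of_ne_nil _ hMne, List.getLast?_concat, eq_comm] at this
    have hMhead : M.head? = some y := by
      have := congrArg List.head? h2
      rwa [List.head?_append_of_ne_nil _ hMne, List.head?_cons, eq_comm] at this
    have hl : L ++ x :: y :: R = L ++ [x] ++ M ++ b :: Q := by rw [h2]; simp
    rw [h2, List.isChain_append] at hR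
    rw [h2, List.getLast?_append_of_ne_nil _ (by simp)] at hv
    exact ⟨_, isHamiltonianList_append_reverse_append hL hR.1 hR.2.1 hMne
      (by simpa [hMlast] using ha) (by simpa [hMhead] using hb) hu hv (hl ▸ hnd) (hl ▸ hmem)⟩

theorem isChain_of_isChain_sup_edge {l : List V} {x y : V}
    (h : l.IsChain (G ⊔ edge x y).Adj) (hxy : x ∉ l ∨ y ∉ l) : l.IsChain G.Adj :=
  h.imp_of_mem_imp fun a b ha hb hab => hab.resolve_right fun he => by
    rw [edge_adj] at he
    grind

theorem exists_isHamiltonianList_of_sup_edge [Fintype V] [DecidableRel G.Adj] {u v x y : V}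
    {l : List V} (h : (G ⊔ edge x y).IsHamiltonianList u v l)
    (hdeg : Fintype.card V < G.degree x + G.degree y) : ∃ l', G.IsHamiltonianList u v l' := by
  by_cases hG : l.IsChain G.Adj
  · exact ⟨l, hG, h.head?_eq, h.getLast?_eq, h.nodup, h.mem⟩
  obtain ⟨a, b, L, R, rfl, hab⟩ : ∃ a b L R, l = L ++ a :: b :: R ∧ ¬ G.Adj a b := by
    simpa [List.isChain_iff_forall_rel_of_append_cons_cons] using hG
  have hsplit : L ++ a :: b :: R = (L ++ [a]) ++ b :: R := by simp
  have hchain := h.isChain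
  rw [hsplit, List.isChain_append] at hchain
  have hnd := h.nodup
  rw [hsplit, List.nodup_append] at hnd
  have hb : b ∉ L ++ [a] := fun hb => hnd.2.2 b hb b List.mem_cons_self rfl
  have ha : a ∉ b :: R := fun ha => hnd.2.2 a (by simp) a ha rfl
  have hedge : a = x ∧ b = y ∨ a = y ∧ b = x := by
    have := List.isChain_iff_forall_rel_of_append_cons_cons.1 h.isChain rfl
    simp only [sup_adj, edge_adj, hab, false_or] at this
    exact this.1
  have hu : (L ++ [a]).head? = some u := by simpa using h.head?_eq
  have hv : (b :: R).getLast? = some v := by simpa using h.getLast?_eq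
  rcases hedge with ⟨rfl, rfl⟩ | ⟨rfl, rfl⟩
  · exact exists_isHamiltonianList_of_append_cons_cons
      (isChain_of_isChain_sup_edge hchain.1 (.inr hb))
      (isChain_of_isChain_sup_edge hchain.2.1 (.inl ha)) hu hv h.nodup h.mem hdeg
  · exact exists_isHamiltonianList_of_append_cons_cons
      (isChain_of_isChain_sup_edge hchain.1 (.inl hb))
      (isChain_of_isChain_sup_edge hchain.2.1 (.inr ha)) hu hv h.nodup h.mem (by omega)

theorem exists_isHamiltonianList_of_card_lt_degree_add_degree [Fintype V] [DecidableRel G.Adj]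
    (hG : ∀ x y, x ≠ y → ¬G.Adj x y → Fintype.card V < G.degree x + G.degree y)
    {u v : V} (huv : u ≠ v) : ∃ l, G.IsHamiltonianList u v l := by
  revert hG
  revert ‹DecidableRel G.Adj›
  induction G using WellFoundedGT.induction with
  | _ G ih =>
    intro _ hG
    by_cases hcomplete : ∀ x y, x ≠ y → G.Adj x y
    · exact exists_isHamiltonianList_of_forall_adj hcomplete huv
    push Not at hcomplete
    obtain ⟨x, y, hxy, hnadj⟩ := hcomplete
    have hle : G ≤ G ⊔ edge x y := le_sup_left
    classical
    obtain ⟨l, hl⟩ := ih _ (lt_sup_edge _ _ _ hxy hnadj) fun x' y' hne hnadj' =>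
      (hG x' y' hne fun h => hnadj' (hle h)).trans_le
        (add_le_add (degree_le_of_le hle) (degree_le_of_le hle))
    exact exists_isHamiltonianList_of_sup_edge hl (hG x y hxy hnadj)

end SimpleGraph

theorem stmt_14 [Fintype V] (G : SimpleGraph V) [DecidableRel G.Adj]
    (hδ : ((Fintype.card V : ℝ) + 1) / 2 ≤ G.minDegree) :
    ∀ u v : V, u ≠ v → ∃ p : G.Walk u v, p.IsPath ∧ ∀ w : V, w ∈ p.support := by
  classical
  intro u v huv
  have hmin : Fintype.card V < 2 * G.minDegree := by
    rw [div_le_iff₀ two_pos] at hδ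
    exact_mod_cast (by linarith : (Fintype.card V : ℝ) < 2 * G.minDegree)
  have hore : ∀ x y, x ≠ y → ¬G.Adj x y → Fintype.card V < G.degree x + G.degree y :=
    fun x y _ _ => by linarith [G.minDegree_le_degree x, G.minDegree_le_degree y]
  obtain ⟨l, hl⟩ := exists_isHamiltonianList_of_card_lt_degree_add_degree hore huv
  obtain ⟨p, hp⟩ := hl.exists_isHamiltonian
  exact ⟨p, hp.isPath, hp.mem_support⟩
end

section
/- Let G be a connected graph and let H be a bipartite spanning subgraph of G with the maximum number of edges. Let e = x1x2 be a cut-edge of H, and let I1, I2 be the two components of H − e, each containing at least 2 vertices, with bipartitions (U1,V1), (U2,V2) chosen so that x1 ∈ U1 and x2 ∈ U2. Then E_G(U1,U2) ∪ E_G(V1,V2) = {e} and |E_G(U1,V2) ∪ E_G(V1,U2)| ≤ 1; in particular, the number of edges of G between V(I1) and V(I2) is at most 2. -/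
open SimpleGraph

variable {V : Type*}

/-- The set of edges of `G` with one end in `X` and the other in `Y`. -/
def eBetween (G : SimpleGraph V) (X Y : Set V) : Set (Sym2 V) :=
  {e | ∃ a ∈ X, ∃ b ∈ Y, G.Adj a b ∧ e = s(a, b)}

/-!
Write `K = H - e`. The vertex sets `I₁`, `I₂` are unions of components of `K`, so a bipartition
of `H` may be replaced on `I₁ ∪ I₂` by `(U₁ ∪ V₂, V₁ ∪ U₂)` or by `(U₁ ∪ U₂, V₁ ∪ V₂)`; this gives
two bipartitions of `K`. The first one separates `x₁` from `x₂`, so it is a bipartition of `H`,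
and by maximality every edge of `G` crossing it lies in `H`; between `I₁` and `I₂` that leaves
only `e`. For the second one, two edges of `G` crossing it outside `K` could both be added to `K`,
giving a bipartite subgraph of `G` with one edge more than `H`. That `e` is an edge of `H` at
all comes from maximality too: `H` is connected, since otherwise one of its components could be
recoloured so that an edge of `G` leaving it can be added.
-/

lemma eBetween_comm (G : SimpleGraph V) (X Y : Set V) : eBetween G X Y = eBetween G Y X := by
  ext e
  constructor <;>
    rintro ⟨a, ha, b, hb, hab, rfl⟩ <;> exact ⟨b, hb, a, ha, hab.symm, Sym2.eq_swap⟩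

lemma eBetween_mono (G : SimpleGraph V) {X X' Y Y' : Set V} (hX : X ⊆ X') (hY : Y ⊆ Y') :
    eBetween G X Y ⊆ eBetween G X' Y' := by
  rintro e ⟨a, ha, b, hb, hab, rfl⟩
  exact ⟨a, hX ha, b, hY hb, hab, rfl⟩

lemma eBetween_union_left (G : SimpleGraph V) (X X' Y : Set V) :
    eBetween G (X ∪ X') Y = eBetween G X Y ∪ eBetween G X' Y := by
  ext e
  simp only [eBetween, Set.mem_union, Set.mem_ofPred_eq]
  grind

lemma eBetween_union_right (G : SimpleGraph V) (X Y Y' : Set V) :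
    eBetween G X (Y ∪ Y') = eBetween G X Y ∪ eBetween G X Y' := by
  rw [eBetween_comm, eBetween_union_left, eBetween_comm G Y, eBetween_comm G Y']

lemma disjoint_eBetween_edgeSet (G K : SimpleGraph V) {X Y : Set V}
    (h : ∀ a ∈ X, ∀ b ∈ Y, ¬K.Adj a b) : Disjoint (eBetween G X Y) K.edgeSet := by
  rw [Set.disjoint_left]
  rintro e ⟨a, ha, b, hb, -, rfl⟩
  exact h a ha b hb

namespace SimpleGraph

lemma ncard_edgeSet_sup_edge [Finite V] {G : SimpleGraph V} {a b : V} (hn : ¬G.Adj a b)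
    (hab : a ≠ b) : (G ⊔ edge a b).edgeSet.ncard = G.edgeSet.ncard + 1 := by
  rw [edgeSet_sup, edgeSet_edge_of_ne hab, Set.union_singleton]
  exact Set.ncard_insert_of_notMem hn

section Bipartition

variable {G G' : SimpleGraph V} {s t s' t' C C' : Set V}

lemma IsBipartite.exists_isBipartiteWith_compl (h : G.IsBipartite) :
    ∃ s, G.IsBipartiteWith s sᶜ := by
  obtain ⟨c, hc⟩ := h
  refine ⟨{v | c v = 0}, disjoint_compl_right, fun v w hvw => ?_⟩
  have : c v ≠ c w := hc hvw
  simp only [Set.mem_compl_iff, Set.mem_ofPred_eq]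
  omega

lemma IsBipartiteWith.anti (h : G.IsBipartiteWith s t) (hle : G' ≤ G) :
    G'.IsBipartiteWith s t :=
  ⟨h.disjoint, fun _ _ hvw => h.mem_of_adj (hle hvw)⟩

lemma IsBipartiteWith.sup_edge (h : G.IsBipartiteWith s t) {a b : V} (ha : a ∈ s) (hb : b ∈ t) :
    (G ⊔ edge a b).IsBipartiteWith s t := by
  refine ⟨h.disjoint, fun v w hvw => ?_⟩
  rcases hvw with hvw | hvw
  · exact h.mem_of_adj hvw
  · rw [edge_adj] at hvw
    rcases hvw.1 with ⟨rfl, rfl⟩ | ⟨rfl, rfl⟩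
    exacts [.inl ⟨ha, hb⟩, .inr ⟨hb, ha⟩]

structure IsBipartiteWithOn (G : SimpleGraph V) (C s t : Set V) : Prop where
  disjoint : Disjoint s t
  left_subset : s ⊆ C
  right_subset : t ⊆ C
  mem_of_adj ⦃v w : V⦄ : v ∈ C → G.Adj v w → v ∈ s ∧ w ∈ t ∨ v ∈ t ∧ w ∈ s

lemma IsBipartiteWithOn.symm (h : G.IsBipartiteWithOn C s t) : G.IsBipartiteWithOn C t s :=
  ⟨h.disjoint.symm, h.right_subset, h.left_subset, fun _ _ hv hvw => (h.mem_of_adj hv hvw).symm⟩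

lemma IsBipartiteWithOn.union (h : G.IsBipartiteWithOn C s t) (h' : G.IsBipartiteWithOn C' s' t')
    (hC : Disjoint C C') : G.IsBipartiteWithOn (C ∪ C') (s ∪ s') (t ∪ t') := by
  refine ⟨?_, Set.union_subset_union h.left_subset h'.left_subset,
    Set.union_subset_union h.right_subset h'.right_subset, fun v w hv hvw => ?_⟩
  · rw [Set.disjoint_union_left, Set.disjoint_union_right, Set.disjoint_union_right]
    exact ⟨⟨h.disjoint, hC.mono h.left_subset h'.right_subset⟩,
      hC.symm.mono h'.left_subset h.right_subset, h'.disjoint⟩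
  · rcases hv with hv | hv
    · rcases h.mem_of_adj hv hvw with h | h <;> simp [h]
    · rcases h'.mem_of_adj hv hvw with h | h <;> simp [h]

lemma IsBipartiteWith.isBipartiteWithOn (h : G.IsBipartiteWith s t)
    (hC : ∀ ⦃v w⦄, G.Adj v w → v ∈ C → w ∈ C) : G.IsBipartiteWithOn C (s ∩ C) (t ∩ C) := by
  refine ⟨h.disjoint.mono Set.inter_subset_left Set.inter_subset_left, Set.inter_subset_right,
    Set.inter_subset_right, fun v w hv hvw => ?_⟩
  rcases h.mem_of_adj hvw with ⟨hv', hw'⟩ | ⟨hv', hw'⟩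
  exacts [.inl ⟨⟨hv', hv⟩, hw', hC hvw hv⟩, .inr ⟨⟨hv', hv⟩, hw', hC hvw hv⟩]

lemma isBipartiteWithOn_univ : G.IsBipartiteWithOn Set.univ s t ↔ G.IsBipartiteWith s t :=
  ⟨fun h => ⟨h.disjoint, fun _ _ hvw => h.mem_of_adj (Set.mem_univ _) hvw⟩,
    fun h => ⟨h.disjoint, Set.subset_univ _, Set.subset_univ _, fun _ _ _ hvw => h.mem_of_adj hvw⟩⟩

lemma IsBipartiteWith.replaceOn (h : G.IsBipartiteWith s t)
    (hC : ∀ ⦃v w⦄, G.Adj v w → v ∈ C → w ∈ C) (h' : G.IsBipartiteWithOn C s' t') :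
    G.IsBipartiteWith (s' ∪ s \ C) (t' ∪ t \ C) := by
  have hCc : ∀ ⦃v w⦄, G.Adj v w → v ∈ Cᶜ → w ∈ Cᶜ := fun _ _ hvw hv hw => hv (hC hvw.symm hw)
  rw [← isBipartiteWithOn_univ, ← Set.union_compl_self C]
  exact h'.union (h.isBipartiteWithOn hCc) disjoint_compl_right

lemma IsBipartite.exists_isBipartiteWith_of_isBipartiteWithOn (h : G.IsBipartite)
    (hC : ∀ ⦃v w⦄, G.Adj v w → v ∈ C → w ∈ C) (h' : G.IsBipartiteWithOn C s' t') :
    ∃ s t, G.IsBipartiteWith s t ∧ s' ⊆ s ∧ t' ⊆ t :=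
  let ⟨_, _, hst⟩ := h.exists_isBipartiteWith
  ⟨_, _, hst.replaceOn hC h', Set.subset_union_left, Set.subset_union_left⟩

end Bipartition

lemma IsBridge.disjoint_reachable {H : SimpleGraph V} {x y : V} (h : H.IsBridge s(x, y)) :
    Disjoint {w | (H.deleteEdges {s(x, y)}).Reachable x w}
      {w | (H.deleteEdges {s(x, y)}).Reachable y w} :=
  Set.disjoint_left.2 fun _ hx hy => h (Reachable.trans hx (Reachable.symm hy))

-- Only meaningful for finite `V`: the `Set.ncard` of an infinite set is `0`.
structure IsMaxBipartiteSubgraph (H G : SimpleGraph V) : Prop where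
  le : H ≤ G
  isBipartite : H.IsBipartite
  ncard_edgeSet_le ⦃H' : SimpleGraph V⦄ :
    H' ≤ G → H'.IsBipartite → H'.edgeSet.ncard ≤ H.edgeSet.ncard

namespace IsMaxBipartiteSubgraph

variable [Finite V] {G H : SimpleGraph V} {s t : Set V} {a b : V}

lemma adj_of_isBipartiteWith (hH : H.IsMaxBipartiteSubgraph G) (hst : H.IsBipartiteWith s t)
    (ha : a ∈ s) (hb : b ∈ t) (hab : G.Adj a b) : H.Adj a b := by
  by_contra hn
  have hle := hH.ncard_edgeSet_le (sup_le hH.le ((edge_le_iff _).2 (.inr hab)))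
    (hst.sup_edge ha hb).isBipartite
  rw [ncard_edgeSet_sup_edge hn hab.ne] at hle
  omega

lemma eBetween_subset_edgeSet (hH : H.IsMaxBipartiteSubgraph G) (hst : H.IsBipartiteWith s t) :
    eBetween G s t ⊆ H.edgeSet := by
  rintro e ⟨a, ha, b, hb, hab, rfl⟩
  exact hH.adj_of_isBipartiteWith hst ha hb hab

lemma preconnected (hH : H.IsMaxBipartiteSubgraph G) (hG : G.Preconnected) : H.Preconnected := by
  intro u v
  by_contra huv
  obtain ⟨d, -, hd₁, hd₂⟩ :=
    (hG u v).some.exists_boundary_dart {w | H.Reachable u w} (Reachable.refl u) huv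
  obtain ⟨s, hs⟩ := hH.isBipartite.exists_isBipartiteWith_compl
  have hC : ∀ ⦃v w⦄, H.Adj v w → H.Reachable u v → H.Reachable u w :=
    fun _ _ hvw hv => hv.trans hvw.reachable
  -- the bipartition with the sides swapped on the component of `u`
  have hflip := hs.replaceOn hC (hs.isBipartiteWithOn hC).symm
  suffices H.Adj d.fst d.snd from hd₂ (Reachable.trans hd₁ this.reachable)
  by_cases ha : d.fst ∈ s <;> by_cases hb : d.snd ∈ s
  · exact hH.adj_of_isBipartiteWith hflip.symm (.inl ⟨ha, hd₁⟩) (.inr ⟨hb, hd₂⟩) d.adj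
  · exact hH.adj_of_isBipartiteWith hs ha hb d.adj
  · exact hH.adj_of_isBipartiteWith hs.symm ha hb d.adj
  · exact hH.adj_of_isBipartiteWith hflip (.inl ⟨ha, hd₁⟩) (.inr ⟨hb, hd₂⟩) d.adj

lemma eBetween_sdiff_subset_singleton (hH : H.IsMaxBipartiteSubgraph G) {x y : V}
    (hst : (H.deleteEdges {s(x, y)}).IsBipartiteWith s t) (hx : x ∈ s) (hy : y ∈ t) :
    eBetween G s t \ (H.deleteEdges {s(x, y)}).edgeSet ⊆ {s(x, y)} := by
  have hH' : H ≤ H.deleteEdges {s(x, y)} ⊔ edge x y := by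
    intro v w hvw
    by_cases he : s(v, w) = s(x, y)
    · exact .inr ((edge_adj ..).2 ⟨Sym2.eq_iff.1 he, hvw.ne⟩)
    · exact .inl ((deleteEdges_adj ..).2 ⟨hvw, he⟩)
  intro e ⟨he, heK⟩
  rw [edgeSet_deleteEdges] at heK
  by_contra hne
  exact heK ⟨hH.eBetween_subset_edgeSet ((hst.sup_edge hx hy).anti hH') he, hne⟩

lemma ncard_eBetween_sdiff_le_one (hH : H.IsMaxBipartiteSubgraph G) {e : Sym2 V}
    (he : e ∈ H.edgeSet) (hst : (H.deleteEdges {e}).IsBipartiteWith s t) :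
    (eBetween G s t \ (H.deleteEdges {e}).edgeSet).ncard ≤ 1 := by
  set K := H.deleteEdges {e}
  rw [Set.ncard_le_one]
  rintro _ ⟨⟨a₁, ha₁, b₁, hb₁, hab₁, rfl⟩, hK₁⟩ _ ⟨⟨a₂, ha₂, b₂, hb₂, hab₂, rfl⟩, hK₂⟩
  by_contra hne
  have hn₂ : ¬(K ⊔ edge a₁ b₁).Adj a₂ b₂ := by
    rintro (h | h)
    · exact hK₂ h
    · exact hne (Sym2.eq_iff.2 (((edge_adj ..).1 h).1.imp (fun h => ⟨h.1.symm, h.2.symm⟩)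
        (fun h => ⟨h.2.symm, h.1.symm⟩)))
  have hle := hH.ncard_edgeSet_le
    (sup_le (sup_le ((deleteEdges_le _).trans hH.le) ((edge_le_iff _).2 (.inr hab₁)))
      ((edge_le_iff _).2 (.inr hab₂)))
    ((hst.sup_edge ha₁ hb₁).sup_edge ha₂ hb₂).isBipartite
  have hK : K.edgeSet.ncard + 1 = H.edgeSet.ncard := by
    rw [edgeSet_deleteEdges]
    exact Set.ncard_sdiff_singleton_add_one he
  rw [ncard_edgeSet_sup_edge hn₂ hab₂.ne, ncard_edgeSet_sup_edge hK₁ hab₁.ne] at hle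
  omega

end IsMaxBipartiteSubgraph

section BridgeSplit

variable {G H : SimpleGraph V} {x y : V} {U₁ V₁ U₂ V₂ : Set V}

lemma IsBridge.exists_isBipartiteWith_deleteEdges (hbr : H.IsBridge s(x, y))
    (hbip : H.IsBipartite)
    (h₁ : (H.deleteEdges {s(x, y)}).IsBipartiteWithOn
      {w | (H.deleteEdges {s(x, y)}).Reachable x w} U₁ V₁)
    (h₂ : (H.deleteEdges {s(x, y)}).IsBipartiteWithOn
      {w | (H.deleteEdges {s(x, y)}).Reachable y w} U₂ V₂) :
    ∃ S T, (H.deleteEdges {s(x, y)}).IsBipartiteWith S T ∧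
      U₁ ⊆ S ∧ U₂ ⊆ S ∧ V₁ ⊆ T ∧ V₂ ⊆ T := by
  obtain ⟨S, T, hST, hS, hT⟩ :=
    IsBipartite.exists_isBipartiteWith_of_isBipartiteWithOn (hbip.mono_left (deleteEdges_le _))
      (fun _ _ hvw => Or.imp (fun hv => hv.trans hvw.reachable) (fun hv => hv.trans hvw.reachable))
      (h₁.union h₂ hbr.disjoint_reachable)
  rw [Set.union_subset_iff] at hS hT
  exact ⟨S, T, hST, hS.1, hS.2, hT.1, hT.2⟩

lemma IsBridge.eBetween_subset_sdiff (hbr : H.IsBridge s(x, y)) {X Y S T : Set V}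
    (hX : X ⊆ {w | (H.deleteEdges {s(x, y)}).Reachable x w})
    (hY : Y ⊆ {w | (H.deleteEdges {s(x, y)}).Reachable y w}) (hXS : X ⊆ S) (hYT : Y ⊆ T) :
    eBetween G X Y ⊆ eBetween G S T \ (H.deleteEdges {s(x, y)}).edgeSet := by
  refine Set.subset_sdiff.2 ⟨eBetween_mono G hXS hYT, disjoint_eBetween_edgeSet G _ ?_⟩
  exact fun a ha b hb hab =>
    hbr.disjoint_reachable.notMem_of_mem_left (Reachable.trans (hX ha) hab.reachable) (hY hb)

lemma IsMaxBipartiteSubgraph.eBetween_union_eBetween_subset_singleton [Finite V]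
    (hH : H.IsMaxBipartiteSubgraph G) (hbr : H.IsBridge s(x, y))
    (h₁ : (H.deleteEdges {s(x, y)}).IsBipartiteWithOn
      {w | (H.deleteEdges {s(x, y)}).Reachable x w} U₁ V₁)
    (h₂ : (H.deleteEdges {s(x, y)}).IsBipartiteWithOn
      {w | (H.deleteEdges {s(x, y)}).Reachable y w} U₂ V₂)
    (hx : x ∈ U₁) (hy : y ∈ U₂) :
    eBetween G U₁ U₂ ∪ eBetween G V₁ V₂ ⊆ {s(x, y)} := by
  obtain ⟨S, T, hST, hU₁, hV₂, hV₁, hU₂⟩ :=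
    hbr.exists_isBipartiteWith_deleteEdges hH.isBipartite h₁ h₂.symm
  have hsub := hH.eBetween_sdiff_subset_singleton hST (hU₁ hx) (hU₂ hy)
  have hUU := hbr.eBetween_subset_sdiff (G := G) h₁.left_subset h₂.left_subset hU₁ hU₂
  have hVV := hbr.eBetween_subset_sdiff (G := G) h₁.right_subset h₂.right_subset hV₁ hV₂
  rw [eBetween_comm G T] at hVV
  exact Set.union_subset (hUU.trans hsub) (hVV.trans hsub)

lemma IsMaxBipartiteSubgraph.ncard_eBetween_union_eBetween_le_one [Finite V]
    (hH : H.IsMaxBipartiteSubgraph G) (hbr : H.IsBridge s(x, y)) (hxy : H.Adj x y)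
    (h₁ : (H.deleteEdges {s(x, y)}).IsBipartiteWithOn
      {w | (H.deleteEdges {s(x, y)}).Reachable x w} U₁ V₁)
    (h₂ : (H.deleteEdges {s(x, y)}).IsBipartiteWithOn
      {w | (H.deleteEdges {s(x, y)}).Reachable y w} U₂ V₂) :
    (eBetween G U₁ V₂ ∪ eBetween G V₁ U₂).ncard ≤ 1 := by
  obtain ⟨S, T, hST, hU₁, hU₂, hV₁, hV₂⟩ :=
    hbr.exists_isBipartiteWith_deleteEdges hH.isBipartite h₁ h₂
  have hUV := hbr.eBetween_subset_sdiff (G := G) h₁.left_subset h₂.right_subset hU₁ hV₂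
  have hVU := hbr.eBetween_subset_sdiff (G := G) h₁.right_subset h₂.left_subset hV₁ hU₂
  rw [eBetween_comm G T] at hVU
  exact (Set.ncard_le_ncard (Set.union_subset hUV hVU)).trans
    (hH.ncard_eBetween_sdiff_le_one hxy hST)

end BridgeSplit

end SimpleGraph

theorem stmt_15_general [Fintype V] (G H : SimpleGraph V) (hG : G.Connected) (hHG : H ≤ G)
    (hbip : H.Colorable 2)
    (hmax : ∀ H' : SimpleGraph V, H' ≤ G → H'.Colorable 2 →
      H'.edgeSet.ncard ≤ H.edgeSet.ncard)
    (x₁ x₂ : V) (hbr : H.IsBridge s(x₁, x₂))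
    (I₁ I₂ U₁ V₁ U₂ V₂ : Set V)
    (hI₁ : I₁ = {w | (H.deleteEdges {s(x₁, x₂)}).Reachable x₁ w})
    (hI₂ : I₂ = {w | (H.deleteEdges {s(x₁, x₂)}).Reachable x₂ w})
    (hp₁ : U₁ ∪ V₁ = I₁) (hd₁ : Disjoint U₁ V₁)
    (hp₂ : U₂ ∪ V₂ = I₂) (hd₂ : Disjoint U₂ V₂)
    (hx₁ : x₁ ∈ U₁) (hx₂ : x₂ ∈ U₂)
    (hbip₁ : ∀ a b : V, a ∈ I₁ → b ∈ I₁ → H.Adj a b →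
      (a ∈ U₁ ∧ b ∈ V₁) ∨ (a ∈ V₁ ∧ b ∈ U₁))
    (hbip₂ : ∀ a b : V, a ∈ I₂ → b ∈ I₂ → H.Adj a b →
      (a ∈ U₂ ∧ b ∈ V₂) ∨ (a ∈ V₂ ∧ b ∈ U₂)) :
    eBetween G U₁ U₂ ∪ eBetween G V₁ V₂ = {s(x₁, x₂)} ∧
    (eBetween G U₁ V₂ ∪ eBetween G V₁ U₂).ncard ≤ 1 ∧
    (eBetween G I₁ I₂).ncard ≤ 2 := by
  have hH : H.IsMaxBipartiteSubgraph G := ⟨hHG, hbip, hmax⟩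
  have he : H.Adj x₁ x₂ := hbr.reachable_iff_adj.1 (hH.preconnected hG.preconnected x₁ x₂)
  subst hI₁ hI₂
  have h₁ : (H.deleteEdges {s(x₁, x₂)}).IsBipartiteWithOn _ U₁ V₁ :=
    ⟨hd₁, hp₁ ▸ Set.subset_union_left, hp₁ ▸ Set.subset_union_right,
      fun v w hv hvw => hbip₁ v w hv (hv.trans hvw.reachable) hvw.1⟩
  have h₂ : (H.deleteEdges {s(x₁, x₂)}).IsBipartiteWithOn _ U₂ V₂ :=
    ⟨hd₂, hp₂ ▸ Set.subset_union_left, hp₂ ▸ Set.subset_union_right,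
      fun v w hv hvw => hbip₂ v w hv (hv.trans hvw.reachable) hvw.1⟩
  have hsame : eBetween G U₁ U₂ ∪ eBetween G V₁ V₂ = {s(x₁, x₂)} :=
    (hH.eBetween_union_eBetween_subset_singleton hbr h₁ h₂ hx₁ hx₂).antisymm
      (Set.singleton_subset_iff.2 (.inl ⟨x₁, hx₁, x₂, hx₂, hHG he, rfl⟩))
  have hcross := hH.ncard_eBetween_union_eBetween_le_one hbr he h₁ h₂
  refine ⟨hsame, hcross, ?_⟩
  have hsplit : eBetween G (U₁ ∪ V₁) (U₂ ∪ V₂) =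
      (eBetween G U₁ U₂ ∪ eBetween G V₁ V₂) ∪ (eBetween G U₁ V₂ ∪ eBetween G V₁ U₂) := by
    rw [eBetween_union_left, eBetween_union_right, eBetween_union_right]
    ac_rfl
  rw [← hp₁, ← hp₂, hsplit]
  calc _ ≤ (eBetween G U₁ U₂ ∪ eBetween G V₁ V₂).ncard
        + (eBetween G U₁ V₂ ∪ eBetween G V₁ U₂).ncard := Set.ncard_union_le _ _
    _ ≤ 2 := by rw [hsame, Set.ncard_singleton]; omega

theorem stmt_15 [Fintype V] (G H : SimpleGraph V) (hG : G.Connected) (hHG : H ≤ G)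
    (hbip : H.Colorable 2)
    (hmax : ∀ H' : SimpleGraph V, H' ≤ G → H'.Colorable 2 →
      H'.edgeSet.ncard ≤ H.edgeSet.ncard)
    (x₁ x₂ : V) (hbr : H.IsBridge s(x₁, x₂))
    (I₁ I₂ U₁ V₁ U₂ V₂ : Set V)
    (hI₁ : I₁ = {w | (H.deleteEdges {s(x₁, x₂)}).Reachable x₁ w})
    (hI₂ : I₂ = {w | (H.deleteEdges {s(x₁, x₂)}).Reachable x₂ w})
    (hc₁ : 2 ≤ I₁.ncard) (hc₂ : 2 ≤ I₂.ncard)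
    (hp₁ : U₁ ∪ V₁ = I₁) (hd₁ : Disjoint U₁ V₁)
    (hp₂ : U₂ ∪ V₂ = I₂) (hd₂ : Disjoint U₂ V₂)
    (hx₁ : x₁ ∈ U₁) (hx₂ : x₂ ∈ U₂)
    (hbip₁ : ∀ a b : V, a ∈ I₁ → b ∈ I₁ → H.Adj a b →
      (a ∈ U₁ ∧ b ∈ V₁) ∨ (a ∈ V₁ ∧ b ∈ U₁))
    (hbip₂ : ∀ a b : V, a ∈ I₂ → b ∈ I₂ → H.Adj a b →
      (a ∈ U₂ ∧ b ∈ V₂) ∨ (a ∈ V₂ ∧ b ∈ U₂)) :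
    eBetween G U₁ U₂ ∪ eBetween G V₁ V₂ = {s(x₁, x₂)} ∧
    (eBetween G U₁ V₂ ∪ eBetween G V₁ U₂).ncard ≤ 1 ∧
    (eBetween G I₁ I₂).ncard ≤ 2 :=
  stmt_15_general G H hG hHG hbip hmax x₁ x₂ hbr I₁ I₂ U₁ V₁ U₂ V₂ hI₁ hI₂ hp₁ hd₁ hp₂ hd₂ hx₁ hx₂
    hbip₁ hbip₂
end
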